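/- arXiv:1512.08741 — 7 statements merged into one kernel-verified Lean document; each statement's English description precedes it below -/
import Mathlib

section
/- Let $E$ be an infinite dimensional Banach space with modulus of asymptotic uniform smoothness $\overline{\rho}_E$. If $(x_\alpha)$ is a net contained in a compact subset of the closed unit ball $B_E$ and $(w_\alpha)$ is a bounded weakly null net in $E$ (indexed by the same directed set), then $\limsup_\alpha\|x_\alpha+w_\alpha\|\le 1+\overline{\rho}_E(\limsup_\alpha\|w_\alpha\|)$. -/
open Filter

/-- Modulus of asymptotic pointwise smoothness of `E` at `x` for parameter `t`. -/
noncomputable def asympRhoPt (E : Type*) [NormedAddCommGroup E] [NormedSpace ℝ E]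
    (t : ℝ) (x : E) : ℝ :=
  sInf { r | ∃ H : Submodule ℝ E, IsClosed (H : Set E) ∧ FiniteDimensional ℝ (E ⧸ H) ∧
    r = sSup {s | ∃ h ∈ H, ‖h‖ ≤ t ∧ s = ‖x + h‖} - 1 }

/-- Modulus of asymptotic uniform smoothness of `E`. -/
noncomputable def asympRho (E : Type*) [NormedAddCommGroup E] [NormedSpace ℝ E]
    (t : ℝ) : ℝ :=
  sSup { r | ∃ x : E, ‖x‖ = 1 ∧ r = asympRhoPt E t x }

/-!
Cover the compact set `K` by finitely many `ε`-balls. For a centre `y = ‖y‖ • v` with `‖v‖ = 1`,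
the definition of `asympRho` gives a closed subspace `H` of finite codimension such that
`‖v ± h‖ ≤ 1 + ρ(t) + ε` for `h ∈ H`, `‖h‖ ≤ t`; by convexity the same bound holds for `‖y + h‖`.
Intersecting these finitely many subspaces gives one `H` that works uniformly on `K`. A weakly null
net is norm null in the finite-dimensional quotient `E ⧸ H`, so lifting its image there splits it
as a net in `H` plus a norm-null net; the net in `H` eventually has norm below `t + 2ε`, where
`t = limsup ‖w α‖`, and shrinking it radially into the `t`-ball costs at most `2ε`.
-/

open Topology

theorem finiteDimensional_quotient_iInf {K V : Type*} [DivisionRing K] [AddCommGroup V]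
    [Module K V] {ι : Type*} [Finite ι] (H : ι → Submodule K V)
    [∀ i, FiniteDimensional K (V ⧸ H i)] : FiniteDimensional K (V ⧸ ⨅ i, H i) := by
  let f := LinearMap.pi fun i => (H i).mkQ
  have hker : LinearMap.ker f = ⨅ i, H i := by simp [f, LinearMap.ker_pi]
  exact hker ▸ f.quotKerEquivRange.symm.finiteDimensional

section

variable {E : Type*} [NormedAddCommGroup E] [NormedSpace ℝ E]

theorem tendsto_zero_of_forall_dual_tendsto_zero [FiniteDimensional ℝ E] {ι : Type*}
    {l : Filter ι} {u : ι → E} (hu : ∀ f : E →L[ℝ] ℝ, Tendsto (fun α => f (u α)) l (𝓝 0)) :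
    Tendsto u l (𝓝 0) := by
  let e := (Module.finBasis ℝ E).equivFunL
  have he : Tendsto (fun α => e (u α)) l (𝓝 0) :=
    tendsto_pi_nhds.2 fun i => by
      simpa using hu ((ContinuousLinearMap.proj i).comp
        (e : E →L[ℝ] Fin (Module.finrank ℝ E) → ℝ))
  simpa [Function.comp_def] using (e.symm.continuous.tendsto 0).comp he

theorem exists_tendsto_zero_forall_sub_mem {ι : Type*} {l : Filter ι} {H : Submodule ℝ E}
    (hH : IsClosed (H : Set E)) [FiniteDimensional ℝ (E ⧸ H)] {w : ι → E}
    (hw : ∀ f : E →L[ℝ] ℝ, Tendsto (fun α => f (w α)) l (𝓝 0)) :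
    ∃ g : ι → E, Tendsto g l (𝓝 0) ∧ ∀ α, w α - g α ∈ H := by
  have := hH -- makes `E ⧸ H` a normed, hence Hausdorff, space
  obtain ⟨σ, hσ⟩ := H.mkQ.exists_rightInverse_of_surjective H.range_mkQ
  have hσc : Continuous σ := LinearMap.continuous_of_finiteDimensional σ
  refine ⟨fun α => σ (H.mkQ (w α)), ?_, fun α => ?_⟩
  · have hπw : Tendsto (fun α => H.mkQL (w α)) l (𝓝 0) :=
      tendsto_zero_of_forall_dual_tendsto_zero fun f => hw (f.comp H.mkQL)
    exact map_zero σ ▸ (hσc.tendsto 0).comp hπw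
  · rw [← Submodule.Quotient.mk_eq_zero, ← Submodule.mkQ_apply, map_sub,
      ← LinearMap.comp_apply H.mkQ σ, hσ, LinearMap.id_apply, sub_self]

theorem exists_norm_eq_one_eq_norm_smul [Nontrivial E] (y : E) :
    ∃ v : E, ‖v‖ = 1 ∧ y = ‖y‖ • v := by
  rcases eq_or_ne y 0 with rfl | hy
  · obtain ⟨v, hv⟩ := exists_norm_eq E zero_le_one
    exact ⟨v, hv, by simp⟩
  · exact ⟨‖y‖⁻¹ • y, norm_smul_inv_norm hy, by
      rw [smul_smul, mul_inv_cancel₀ (norm_ne_zero_iff.2 hy), one_smul]⟩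

theorem norm_smul_add_le_of_abs_le_one {v h : E} {s C : ℝ} (hs : |s| ≤ 1)
    (hadd : ‖v + h‖ ≤ C) (hsub : ‖v - h‖ ≤ C) : ‖s • v + h‖ ≤ C := by
  obtain ⟨hs₁, hs₂⟩ := abs_le.1 hs
  calc ‖s • v + h‖ = ‖((1 + s) / 2) • (v + h) - ((1 - s) / 2) • (v - h)‖ := by
        congr 1; module
    _ ≤ (1 + s) / 2 * ‖v + h‖ + (1 - s) / 2 * ‖v - h‖ := by
        refine (norm_sub_le _ _).trans_eq ?_
        rw [norm_smul, norm_smul, Real.norm_of_nonneg (by linarith),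
          Real.norm_of_nonneg (by linarith)]
    _ ≤ C := by nlinarith

theorem norm_add_le_add_of_mem {H : Submodule ℝ E} {x h : E} {t C δ : ℝ} (ht : 0 ≤ t)
    (hδ : 0 ≤ δ) (hH : ∀ h ∈ H, ‖h‖ ≤ t → ‖x + h‖ ≤ C) (hh : h ∈ H) (hht : ‖h‖ ≤ t + δ) :
    ‖x + h‖ ≤ C + δ := by
  rcases le_or_gt ‖h‖ t with hle | hlt
  · linarith [hH h hh hle]
  have hpos : 0 < ‖h‖ := ht.trans_lt hlt
  set c := t / ‖h‖
  have hc : ‖c • h‖ = t := by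
    rw [norm_smul, Real.norm_of_nonneg (by positivity), div_mul_cancel₀ _ hpos.ne']
  have hc₁ : 0 ≤ 1 - c := by rw [sub_nonneg, div_le_one hpos]; exact hlt.le
  have hrest : ‖h - c • h‖ = ‖h‖ - t :=
    calc ‖h - c • h‖ = ‖(1 - c) • h‖ := by rw [sub_smul, one_smul]
      _ = ‖h‖ - t := by
        rw [norm_smul, Real.norm_of_nonneg hc₁, sub_mul, one_mul, div_mul_cancel₀ _ hpos.ne']
  calc ‖x + h‖ = ‖(x + c • h) + (h - c • h)‖ := by congr 1; abel
    _ ≤ ‖x + c • h‖ + ‖h - c • h‖ := norm_add_le _ _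
    _ ≤ C + δ := by linarith [hH _ (H.smul_mem c hh) hc.le]

theorem sSup_norm_add_le {t : ℝ} (ht : 0 ≤ t) (x : E) (H : Submodule ℝ E) :
    sSup {s | ∃ h ∈ H, ‖h‖ ≤ t ∧ s = ‖x + h‖} ≤ ‖x‖ + t :=
  Real.sSup_le (fun _ ⟨h, _, hht, hs⟩ => hs ▸ (norm_add_le x h).trans (by linarith))
    (by positivity)

theorem norm_add_le_sSup_norm_add {t : ℝ} (x : E) {H : Submodule ℝ E} {h : E} (hh : h ∈ H)
    (hht : ‖h‖ ≤ t) : ‖x + h‖ ≤ sSup {s | ∃ h ∈ H, ‖h‖ ≤ t ∧ s = ‖x + h‖} :=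
  le_csSup ⟨‖x‖ + t, fun _ ⟨h, _, hht, hs⟩ => hs ▸ (norm_add_le x h).trans (by linarith)⟩
    ⟨h, hh, hht, rfl⟩

theorem asympRhoPt_le {t : ℝ} (ht : 0 ≤ t) (x : E) : asympRhoPt E t x ≤ ‖x‖ + t - 1 := by
  have hbdd : BddBelow {r | ∃ H : Submodule ℝ E, IsClosed (H : Set E) ∧
      FiniteDimensional ℝ (E ⧸ H) ∧ r = sSup {s | ∃ h ∈ H, ‖h‖ ≤ t ∧ s = ‖x + h‖} - 1} := by
    refine ⟨‖x‖ - 1, fun _ ⟨H, _, _, hr⟩ => ?_⟩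
    have := norm_add_le_sSup_norm_add x H.zero_mem (norm_zero.trans_le ht)
    rw [add_zero] at this
    linarith
  calc asympRhoPt E t x ≤ sSup {s | ∃ h ∈ (⊤ : Submodule ℝ E), ‖h‖ ≤ t ∧ s = ‖x + h‖} - 1 :=
        csInf_le hbdd ⟨⊤, by simp, inferInstance, rfl⟩
    _ ≤ ‖x‖ + t - 1 := by linarith [sSup_norm_add_le ht x ⊤]

theorem asympRhoPt_le_asympRho {t : ℝ} (ht : 0 ≤ t) {x : E} (hx : ‖x‖ = 1) :
    asympRhoPt E t x ≤ asympRho E t :=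
  le_csSup ⟨t, fun _ ⟨y, hy, hr⟩ => hr ▸ (asympRhoPt_le ht y).trans_eq (by rw [hy]; ring)⟩
    ⟨x, hx, rfl⟩

theorem exists_sSup_norm_add_sub_one_lt {t ε : ℝ} (hε : 0 < ε) (x : E) :
    ∃ H : Submodule ℝ E, IsClosed (H : Set E) ∧ FiniteDimensional ℝ (E ⧸ H) ∧
      sSup {s | ∃ h ∈ H, ‖h‖ ≤ t ∧ s = ‖x + h‖} - 1 < asympRhoPt E t x + ε := by
  have hne : {r | ∃ H : Submodule ℝ E, IsClosed (H : Set E) ∧ FiniteDimensional ℝ (E ⧸ H) ∧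
      r = sSup {s | ∃ h ∈ H, ‖h‖ ≤ t ∧ s = ‖x + h‖} - 1}.Nonempty :=
    ⟨_, ⊤, by simp, inferInstance, rfl⟩
  obtain ⟨_, ⟨H, hHc, hHfd, rfl⟩, hlt⟩ := Real.lt_sInf_add_pos hne hε
  exact ⟨H, hHc, hHfd, hlt⟩

theorem exists_subspace_norm_add_le_of_norm_eq_one {t ε : ℝ} (ht : 0 ≤ t) (hε : 0 < ε) {x : E}
    (hx : ‖x‖ = 1) :
    ∃ H : Submodule ℝ E, IsClosed (H : Set E) ∧ FiniteDimensional ℝ (E ⧸ H) ∧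
      ∀ h ∈ H, ‖h‖ ≤ t → ‖x + h‖ ≤ 1 + asympRho E t + ε := by
  obtain ⟨H, hHc, hHfd, hlt⟩ := exists_sSup_norm_add_sub_one_lt hε x
  refine ⟨H, hHc, hHfd, fun h hh hht => ?_⟩
  linarith [norm_add_le_sSup_norm_add x hh hht, asympRhoPt_le_asympRho ht hx]

theorem exists_subspace_norm_add_le_of_norm_le_one [Nontrivial E] {t ε : ℝ} (ht : 0 ≤ t)
    (hε : 0 < ε) {y : E} (hy : ‖y‖ ≤ 1) :
    ∃ H : Submodule ℝ E, IsClosed (H : Set E) ∧ FiniteDimensional ℝ (E ⧸ H) ∧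
      ∀ h ∈ H, ‖h‖ ≤ t → ‖y + h‖ ≤ 1 + asympRho E t + ε := by
  obtain ⟨v, hv, hyv⟩ := exists_norm_eq_one_eq_norm_smul y
  obtain ⟨H, hHc, hHfd, hH⟩ := exists_subspace_norm_add_le_of_norm_eq_one ht hε hv
  refine ⟨H, hHc, hHfd, fun h hh hht => ?_⟩
  have hsub : ‖v - h‖ ≤ 1 + asympRho E t + ε := by
    simpa [sub_eq_add_neg] using hH (-h) (H.neg_mem hh) (by rwa [norm_neg])
  rw [hyv]
  exact norm_smul_add_le_of_abs_le_one (by rwa [abs_norm]) (hH h hh hht) hsub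

theorem exists_subspace_forall_mem_norm_add_le_of_isCompact {K : Set E} (hK : IsCompact K)
    {t C ε : ℝ} (hε : 0 < ε)
    (hloc : ∀ y ∈ K, ∃ H : Submodule ℝ E, IsClosed (H : Set E) ∧ FiniteDimensional ℝ (E ⧸ H) ∧
      ∀ h ∈ H, ‖h‖ ≤ t → ‖y + h‖ ≤ C) :
    ∃ H : Submodule ℝ E, IsClosed (H : Set E) ∧ FiniteDimensional ℝ (E ⧸ H) ∧
      ∀ x ∈ K, ∀ h ∈ H, ‖h‖ ≤ t → ‖x + h‖ ≤ C + ε := by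
  choose! Hy hHc hHfd hHy using hloc
  obtain ⟨T, hTK, hcover⟩ :=
    hK.elim_nhds_subcover (fun y => Metric.ball y ε) fun y _ => Metric.ball_mem_nhds y hε
  have : ∀ y : T, FiniteDimensional ℝ (E ⧸ Hy y) := fun y => hHfd y (hTK y y.2)
  refine ⟨⨅ y : T, Hy y, ?_, finiteDimensional_quotient_iInf _, fun x hx h hh hht => ?_⟩
  · rw [Submodule.coe_iInf]
    exact isClosed_iInter fun y => hHc y (hTK y y.2)
  obtain ⟨y, hyT, hxy⟩ := Set.mem_iUnion₂.1 (hcover hx)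
  have hyh := hHy y (hTK y hyT) h (iInf_le (fun y : T => Hy y) ⟨y, hyT⟩ hh) hht
  rw [Metric.mem_ball, dist_eq_norm] at hxy
  calc ‖x + h‖ = ‖(y + h) + (x - y)‖ := by congr 1; abel
    _ ≤ ‖y + h‖ + ‖x - y‖ := norm_add_le _ _
    _ ≤ C + ε := by linarith

theorem eventually_norm_add_le {ι : Type*} {l : Filter ι} {K : Set E} {H : Submodule ℝ E}
    (hHc : IsClosed (H : Set E)) [FiniteDimensional ℝ (E ⧸ H)] {t C ε : ℝ} (ht : 0 ≤ t)
    (hε : 0 < ε) (hH : ∀ x ∈ K, ∀ h ∈ H, ‖h‖ ≤ t → ‖x + h‖ ≤ C) {x w : ι → E}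
    (hxK : ∀ α, x α ∈ K) (hw : ∀ f : E →L[ℝ] ℝ, Tendsto (fun α => f (w α)) l (𝓝 0))
    (hwt : ∀ᶠ α in l, ‖w α‖ ≤ t + ε) :
    ∀ᶠ α in l, ‖x α + w α‖ ≤ C + 3 * ε := by
  obtain ⟨g, hg, hwg⟩ := exists_tendsto_zero_forall_sub_mem hHc hw
  filter_upwards [hwt, (tendsto_zero_iff_norm_tendsto_zero.1 hg).eventually
    (eventually_le_nhds hε)] with α hwα hgα
  have hdiff : ‖w α - g α‖ ≤ t + 2 * ε := (norm_sub_le _ _).trans (by linarith)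
  have := norm_add_le_add_of_mem ht (by positivity) (hH _ (hxK α)) (hwg α) hdiff
  calc ‖x α + w α‖ = ‖(x α + (w α - g α)) + g α‖ := by congr 1; abel
    _ ≤ ‖x α + (w α - g α)‖ + ‖g α‖ := norm_add_le _ _
    _ ≤ C + 3 * ε := by linarith

end

theorem stmt1_general {E : Type*} [NormedAddCommGroup E] [NormedSpace ℝ E]
    (hinf : ¬ FiniteDimensional ℝ E)
    {ι : Type*} [Preorder ι] [IsDirected ι (· ≤ ·)] [Nonempty ι]
    (x : ι → E) (K : Set E) (hKcpt : IsCompact K) (hKball : K ⊆ Metric.closedBall 0 1)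
    (hxK : ∀ α, x α ∈ K) (w : ι → E)
    (hbdd : ∃ M : ℝ, ∀ α, ‖w α‖ ≤ M)
    (hwnull : ∀ f : E →L[ℝ] ℝ, Tendsto (fun α => f (w α)) atTop (nhds 0)) :
    limsup (fun α => ‖x α + w α‖) atTop ≤
      1 + asympRho E (limsup (fun α => ‖w α‖) atTop) := by
  have : Nontrivial E := by
    by_contra h
    exact hinf (by rw [not_nontrivial_iff_subsingleton] at h; infer_instance)
  set t := limsup (fun α => ‖w α‖) atTop
  have hwb : IsBoundedUnder (· ≤ ·) atTop (fun α => ‖w α‖) := isBoundedUnder_of hbdd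
  have ht : 0 ≤ t := le_limsup_of_frequently_le (.of_forall fun α => norm_nonneg _) hwb
  refine le_of_forall_pos_le_add fun δ hδ => ?_
  have hε : 0 < δ / 5 := by positivity
  obtain ⟨H, hHc, hHfd, hH⟩ := exists_subspace_forall_mem_norm_add_le_of_isCompact hKcpt hε
    fun y hy => exists_subspace_norm_add_le_of_norm_le_one ht hε
      (mem_closedBall_zero_iff.1 (hKball hy))
  have hwt : ∀ᶠ α in atTop, ‖w α‖ ≤ t + δ / 5 :=
    (eventually_lt_of_limsup_lt (lt_add_of_pos_right t hε) hwb).mono fun _ => le_of_lt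
  calc limsup (fun α => ‖x α + w α‖) atTop ≤ 1 + asympRho E t + δ / 5 + δ / 5 + 3 * (δ / 5) :=
        limsup_le_of_le (isCoboundedUnder_le_of_le atTop fun α => norm_nonneg _)
          (eventually_norm_add_le hHc ht hε hH hxK hwnull hwt)
    _ = 1 + asympRho E t + δ := by ring

theorem stmt1 {E : Type*} [NormedAddCommGroup E] [NormedSpace ℝ E] [CompleteSpace E]
    (hinf : ¬ FiniteDimensional ℝ E)
    {ι : Type*} [Preorder ι] [IsDirected ι (· ≤ ·)] [Nonempty ι]
    (x : ι → E) (K : Set E) (hKcpt : IsCompact K) (hKball : K ⊆ Metric.closedBall 0 1)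
    (hxK : ∀ α, x α ∈ K) (w : ι → E)
    (hbdd : ∃ M : ℝ, ∀ α, ‖w α‖ ≤ M)
    (hwnull : ∀ f : E →L[ℝ] ℝ, Tendsto (fun α => f (w α)) atTop (nhds 0)) :
    limsup (fun α => ‖x α + w α‖) atTop ≤
      1 + asympRho E (limsup (fun α => ‖w α‖) atTop) :=
  stmt1_general hinf x K hKcpt hKball hxK w hbdd hwnull
end

section
/- Let $E$ be an infinite dimensional Banach space and $1<p<\infty$. Suppose there exists $C>0$ such that for every $x\in S_E$ and every bounded weakly null net $(w_\alpha)$ in $E$, $\limsup_\alpha\|x+w_\alpha\|^p\ge 1+C\,\limsup_\alpha\|w_\alpha\|^p$. Then there exists a constant $C'>0$ such that for every net $(x_\alpha)$ contained in a compact subset of the closed unit ball $B_E$ and every bounded weakly null net $(w_\alpha)$ in $E$ (same index set), $\limsup_\alpha\|x_\alpha+w_\alpha\|^p\ge \limsup_\alpha(\|x_\alpha\|^p+C'\|w_\alpha\|^p)$. -/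
/-!
Fix `a` below the left-hand limsup and pass to an ultrafilter `U`, finer than the index filter,
on which the left-hand side stays above `a`. By compactness `x α → x₀` along `U`, and
`‖w α‖ → r`, `‖x₀ + w α‖ → s`; then also `‖x α + w α‖ → s`. Every filter is the limit of a net
(indexed by its members), so the hypothesis applies along `U`; by homogeneity it gives
`‖x₀‖ ^ p + C r ^ p ≤ s ^ p` when `x₀ ≠ 0`, while for `x₀ = 0` simply `s = r`. Hence `C' = min C 1`
works: `a ≤ ‖x₀‖ ^ p + C' r ^ p ≤ s ^ p ≤ limsup ‖x α + w α‖ ^ p`.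
-/

open Filter Topology

namespace Filter

variable {ι : Type*} (F : Filter ι)

abbrev Members : Type _ := (↥F.sets)ᵒᵈ

instance : IsDirectedOrder F.Members :=
  ⟨fun s t => ⟨OrderDual.toDual ⟨_, inter_mem (OrderDual.ofDual s).2 (OrderDual.ofDual t).2⟩,
    Set.inter_subset_left, Set.inter_subset_right⟩⟩

instance : Nonempty F.Members := ⟨OrderDual.toDual ⟨Set.univ, univ_mem⟩⟩

variable {F} [F.NeBot]

noncomputable def Members.pt (s : F.Members) : ι := (nonempty_of_mem (OrderDual.ofDual s).2).some

theorem Members.tendsto_pt : Tendsto (Members.pt : F.Members → ι) atTop F := by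
  intro t ht
  rw [mem_map]
  filter_upwards [eventually_ge_atTop (OrderDual.toDual ⟨t, ht⟩ : F.Members)] with s hs
  exact hs (Set.Nonempty.some_mem _)

end Filter

theorem IsCompact.exists_tendsto_ultrafilter {X ι : Type*} [TopologicalSpace X] {K : Set X}
    (hK : IsCompact K) (U : Ultrafilter ι) {f : ι → X} (hf : ∀ i, f i ∈ K) :
    ∃ y, Tendsto f U (𝓝 y) :=
  let ⟨y, _, hy⟩ := hK.ultrafilter_le_nhds' (U.map f) (univ_mem' (s := f ⁻¹' K) hf)
  ⟨y, hy⟩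

theorem Filter.Tendsto.norm_add_of_norm_add {ι E : Type*} [SeminormedAddCommGroup E]
    {l : Filter ι} {x w : ι → E} {x₀ : E} {s : ℝ} (hx : Tendsto x l (𝓝 x₀))
    (hs : Tendsto (fun i => ‖x₀ + w i‖) l (𝓝 s)) : Tendsto (fun i => ‖x i + w i‖) l (𝓝 s) := by
  refine hs.congr_dist (squeeze_zero (fun _ => dist_nonneg) (fun i => ?_)
    (tendsto_iff_dist_tendsto_zero.1 hx))
  calc dist ‖x₀ + w i‖ ‖x i + w i‖ ≤ dist (x₀ + w i) (x i + w i) :=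
        lipschitzWith_one_norm.dist_le_mul_of_le le_rfl |>.trans_eq (one_mul _)
    _ = dist (x i) x₀ := by rw [dist_add_right, dist_comm]

def HasWeaklyNullLowerEstimate (E : Type*) [NormedAddCommGroup E] [NormedSpace ℝ E]
    (p C : ℝ) : Prop :=
  ∀ x : E, ‖x‖ = 1 →
    ∀ (ι : Type) (_ : Preorder ι), IsDirected ι (· ≤ ·) → Nonempty ι →
    ∀ w : ι → E, (∃ M : ℝ, ∀ α, ‖w α‖ ≤ M) →
    (∀ f : E →L[ℝ] ℝ, Tendsto (fun α => f (w α)) atTop (𝓝 0)) →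
    1 + C * limsup (fun α => ‖w α‖ ^ p) atTop ≤ limsup (fun α => ‖x + w α‖ ^ p) atTop

namespace HasWeaklyNullLowerEstimate

variable {E : Type*} [NormedAddCommGroup E] [NormedSpace ℝ E] {p C : ℝ}
  {ι : Type} {w : ι → E} {r s : ℝ}

theorem one_add_mul_rpow_le (h : HasWeaklyNullLowerEstimate E p C) (hp : 0 < p) {x : E}
    (hx : ‖x‖ = 1) {F : Filter ι} [F.NeBot] (hwb : ∃ M, ∀ i, ‖w i‖ ≤ M)
    (hw : ∀ f : E →L[ℝ] ℝ, Tendsto (fun i => f (w i)) F (𝓝 0))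
    (hr : Tendsto (fun i => ‖w i‖) F (𝓝 r)) (hs : Tendsto (fun i => ‖x + w i‖) F (𝓝 s)) :
    1 + C * r ^ p ≤ s ^ p := by
  have hpt := Filter.Members.tendsto_pt (F := F)
  have key := h x hx F.Members inferInstance inferInstance inferInstance (fun d => w d.pt)
    (let ⟨M, hM⟩ := hwb; ⟨M, fun _ => hM _⟩) fun f => (hw f).comp hpt
  have hr' : Tendsto (fun d : F.Members => ‖w d.pt‖ ^ p) atTop (𝓝 (r ^ p)) :=
    (hr.comp hpt).rpow_const (.inr hp.le)
  have hs' : Tendsto (fun d : F.Members => ‖x + w d.pt‖ ^ p) atTop (𝓝 (s ^ p)) :=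
    (hs.comp hpt).rpow_const (.inr hp.le)
  rwa [hr'.limsup_eq, hs'.limsup_eq] at key

theorem rpow_add_mul_rpow_le (h : HasWeaklyNullLowerEstimate E p C) (hp : 0 < p) {x : E}
    (hx : x ≠ 0) {F : Filter ι} [F.NeBot] (hwb : ∃ M, ∀ i, ‖w i‖ ≤ M)
    (hw : ∀ f : E →L[ℝ] ℝ, Tendsto (fun i => f (w i)) F (𝓝 0))
    (hr : Tendsto (fun i => ‖w i‖) F (𝓝 r)) (hs : Tendsto (fun i => ‖x + w i‖) F (𝓝 s)) :
    ‖x‖ ^ p + C * r ^ p ≤ s ^ p := by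
  set t := ‖x‖
  have ht : 0 < t := norm_pos_iff.2 hx
  have hr0 : 0 ≤ r := ge_of_tendsto' hr fun _ => norm_nonneg _
  have hs0 : 0 ≤ s := ge_of_tendsto' hs fun _ => norm_nonneg _
  have norm_smul_inv (y : E) : ‖t⁻¹ • y‖ = t⁻¹ * ‖y‖ := by
    rw [norm_smul, norm_inv, norm_norm]
  have key := h.one_add_mul_rpow_le hp (x := t⁻¹ • x) (w := fun i => t⁻¹ • w i)
    (by rw [norm_smul_inv, inv_mul_cancel₀ ht.ne'])
    (let ⟨M, hM⟩ := hwb; ⟨t⁻¹ * M, fun i => by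
      rw [norm_smul_inv]; exact mul_le_mul_of_nonneg_left (hM i) (inv_nonneg.2 ht.le)⟩)
    (fun f => by simpa using (hw f).const_mul t⁻¹)
    (by simpa only [norm_smul_inv] using hr.const_mul t⁻¹)
    (by simpa only [← smul_add, norm_smul_inv] using hs.const_mul t⁻¹)
  have htp : 0 < t ^ p := Real.rpow_pos_of_pos ht p
  rw [Real.mul_rpow (inv_nonneg.2 ht.le) hr0, Real.mul_rpow (inv_nonneg.2 ht.le) hs0,
    Real.inv_rpow ht.le, le_inv_mul_iff₀ htp] at key
  calc t ^ p + C * r ^ p = t ^ p * (1 + C * ((t ^ p)⁻¹ * r ^ p)) := by field_simp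
    _ ≤ s ^ p := key

theorem rpow_add_min_mul_rpow_le (h : HasWeaklyNullLowerEstimate E p C) (hp : 0 < p) (x : E)
    {F : Filter ι} [F.NeBot] (hwb : ∃ M, ∀ i, ‖w i‖ ≤ M)
    (hw : ∀ f : E →L[ℝ] ℝ, Tendsto (fun i => f (w i)) F (𝓝 0))
    (hr : Tendsto (fun i => ‖w i‖) F (𝓝 r)) (hs : Tendsto (fun i => ‖x + w i‖) F (𝓝 s)) :
    ‖x‖ ^ p + min C 1 * r ^ p ≤ s ^ p := by
  have hrp : 0 ≤ r ^ p := Real.rpow_nonneg (ge_of_tendsto' hr fun _ => norm_nonneg _) p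
  rcases eq_or_ne x 0 with rfl | hx
  · have hsr : s = r := tendsto_nhds_unique hs (by simpa only [zero_add] using hr)
    rw [norm_zero, Real.zero_rpow hp.ne', zero_add, hsr]
    exact mul_le_of_le_one_left hrp (min_le_right _ _)
  · calc ‖x‖ ^ p + min C 1 * r ^ p ≤ ‖x‖ ^ p + C * r ^ p := by gcongr; exact min_le_left _ _
      _ ≤ s ^ p := h.rpow_add_mul_rpow_le hp hx hwb hw hr hs

theorem limsup_le_limsup (h : HasWeaklyNullLowerEstimate E p C) (hp : 0 < p) (hC : 0 ≤ C)
    {l : Filter ι} [l.NeBot] {x : ι → E} {K : Set E} (hK : IsCompact K) (hxK : ∀ i, x i ∈ K)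
    (hwb : ∃ M, ∀ i, ‖w i‖ ≤ M) (hw : ∀ f : E →L[ℝ] ℝ, Tendsto (fun i => f (w i)) l (𝓝 0)) :
    limsup (fun i => ‖x i‖ ^ p + min C 1 * ‖w i‖ ^ p) l ≤ limsup (fun i => ‖x i + w i‖ ^ p) l := by
  obtain ⟨M, hM⟩ := hwb
  obtain ⟨R, hR⟩ := hK.isBounded.exists_norm_le
  have hC1 : 0 ≤ min C 1 := le_min hC zero_le_one
  set L := fun i => ‖x i‖ ^ p + min C 1 * ‖w i‖ ^ p
  have hLcob : IsCoboundedUnder (· ≤ ·) l L := isCoboundedUnder_le_of_le l (x := 0) fun i => by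
    positivity
  have hRbd : IsBoundedUnder (· ≤ ·) l fun i => ‖x i + w i‖ ^ p :=
    isBoundedUnder_of ⟨(R + M) ^ p, fun i => by
      gcongr; exact (norm_add_le _ _).trans (add_le_add (hR _ (hxK i)) (hM i))⟩
  refine le_of_forall_lt_imp_le_of_dense fun a ha => ?_
  have : (l ⊓ 𝓟 {i | a < L i}).NeBot :=
    frequently_iff_neBot.1 (frequently_lt_of_lt_limsup hLcob ha)
  set U := Ultrafilter.of (l ⊓ 𝓟 {i | a < L i})
  have hUl : ↑U ≤ l := (Ultrafilter.of_le _).trans inf_le_left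
  have hUa : ∀ᶠ i in U, a < L i := (Ultrafilter.of_le _).trans inf_le_right (mem_principal_self _)
  obtain ⟨x₀, hx⟩ := hK.exists_tendsto_ultrafilter U hxK
  obtain ⟨r, hr⟩ := (isCompact_Icc (a := 0) (b := M)).exists_tendsto_ultrafilter U
    (f := fun i => ‖w i‖) fun i => ⟨norm_nonneg _, hM i⟩
  obtain ⟨s, hs⟩ := (isCompact_Icc (a := 0) (b := ‖x₀‖ + M)).exists_tendsto_ultrafilter U
    (f := fun i => ‖x₀ + w i‖) fun i =>
      ⟨norm_nonneg _, (norm_add_le _ _).trans (add_le_add_right (hM i) _)⟩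
  have hLU : Tendsto L U (𝓝 (‖x₀‖ ^ p + min C 1 * r ^ p)) :=
    (hx.norm.rpow_const (.inr hp.le)).add ((hr.rpow_const (.inr hp.le)).const_mul _)
  have hRU : Tendsto (fun i => ‖x i + w i‖ ^ p) U (𝓝 (s ^ p)) :=
    (hx.norm_add_of_norm_add hs).rpow_const (.inr hp.le)
  calc a ≤ ‖x₀‖ ^ p + min C 1 * r ^ p := ge_of_tendsto hLU (hUa.mono fun _ => le_of_lt)
    _ ≤ s ^ p := h.rpow_add_min_mul_rpow_le hp x₀ ⟨M, hM⟩ (fun f => (hw f).mono_left hUl) hr hs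
    _ ≤ limsup (fun i => ‖x i + w i‖ ^ p) l :=
      le_limsup_of_le hRbd fun b hb => le_of_tendsto hRU (hb.filter_mono hUl)

end HasWeaklyNullLowerEstimate

theorem stmt3_general {E : Type*} [NormedAddCommGroup E] [NormedSpace ℝ E]
    (p : ℝ) (hp1 : 1 < p)
    (C : ℝ) (hC : 0 < C)
    (hyp : ∀ x : E, ‖x‖ = 1 →
      ∀ (ι : Type) (_ : Preorder ι), IsDirected ι (· ≤ ·) → Nonempty ι →
      ∀ w : ι → E, (∃ M : ℝ, ∀ α, ‖w α‖ ≤ M) →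
      (∀ f : E →L[ℝ] ℝ, Tendsto (fun α => f (w α)) atTop (nhds 0)) →
      1 + C * limsup (fun α => ‖w α‖ ^ p) atTop ≤
        limsup (fun α => ‖x + w α‖ ^ p) atTop) :
    ∃ C' : ℝ, 0 < C' ∧
      ∀ (ι : Type) (_ : Preorder ι), IsDirected ι (· ≤ ·) → Nonempty ι →
      ∀ (x : ι → E) (K : Set E), IsCompact K → K ⊆ Metric.closedBall 0 1 →
      (∀ α, x α ∈ K) →
      ∀ w : ι → E, (∃ M : ℝ, ∀ α, ‖w α‖ ≤ M) →
      (∀ f : E →L[ℝ] ℝ, Tendsto (fun α => f (w α)) atTop (nhds 0)) →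
      limsup (fun α => ‖x α‖ ^ p + C' * ‖w α‖ ^ p) atTop ≤
        limsup (fun α => ‖x α + w α‖ ^ p) atTop := by
  refine ⟨min C 1, lt_min hC one_pos, fun ι _ hdir hne x K hK _ hxK w hwb hw => ?_⟩
  have : (atTop : Filter ι).NeBot := atTop_neBot_iff.2 ⟨hne, hdir⟩
  exact HasWeaklyNullLowerEstimate.limsup_le_limsup hyp (zero_lt_one.trans hp1) hC.le hK hxK hwb hw

theorem stmt3 {E : Type*} [NormedAddCommGroup E] [NormedSpace ℝ E] [CompleteSpace E]
    (hinf : ¬ FiniteDimensional ℝ E) (p : ℝ) (hp1 : 1 < p)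
    (C : ℝ) (hC : 0 < C)
    (hyp : ∀ x : E, ‖x‖ = 1 →
      ∀ (ι : Type) (_ : Preorder ι), IsDirected ι (· ≤ ·) → Nonempty ι →
      ∀ w : ι → E, (∃ M : ℝ, ∀ α, ‖w α‖ ≤ M) →
      (∀ f : E →L[ℝ] ℝ, Tendsto (fun α => f (w α)) atTop (nhds 0)) →
      1 + C * limsup (fun α => ‖w α‖ ^ p) atTop ≤
        limsup (fun α => ‖x + w α‖ ^ p) atTop) :
    ∃ C' : ℝ, 0 < C' ∧
      ∀ (ι : Type) (_ : Preorder ι), IsDirected ι (· ≤ ·) → Nonempty ι →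
      ∀ (x : ι → E) (K : Set E), IsCompact K → K ⊆ Metric.closedBall 0 1 →
      (∀ α, x α ∈ K) →
      ∀ w : ι → E, (∃ M : ℝ, ∀ α, ‖w α‖ ≤ M) →
      (∀ f : E →L[ℝ] ℝ, Tendsto (fun α => f (w α)) atTop (nhds 0)) →
      limsup (fun α => ‖x α‖ ^ p + C' * ‖w α‖ ^ p) atTop ≤
        limsup (fun α => ‖x α + w α‖ ^ p) atTop :=
  stmt3_general p hp1 C hC hyp
end

section
/- Let $J$ be a closed subspace of a Banach space $X$ that is an ideal in $X$ with projection $\mathcal{Q}$ on $X^*$ (kernel $J^\perp$, $\|\mathcal{Q}\|\le 1$). Suppose $\|\mathrm{Id}_{X^*}-\lambda\mathcal{Q}\|\le 1$ for some $\lambda\in(0,2]$. Then for each $x\in B_X$ there exists a net $(y_\alpha)\subset J$ such that $y_\alpha\to x$ in the $\sigma(X,J^*)$-topology (i.e. $\mathcal{Q}x^*(y_\alpha)\to \mathcal{Q}x^*(x)$ for all $x^*\in X^*$) and $\limsup_\alpha\|x-\lambda y_\alpha\|\le 1$. -/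
/-! Fix a finite set `F ⊆ X*`. The linear system `g y₀ = Q g x` (`g ∈ F`) has a solution
`y₀ ∈ J`, since a combination of the `g` vanishing on `J` lies in `J^⊥ = ker Q`. A functional
`f` vanishing on `J₀ = J ∩ ⋂_{g ∈ F} ker g` agrees on `J` with a combination of `F`, so again
`f y₀ = Q f x`, whence `f (x - λ y₀) = ((Id - λ Q) f) x ≤ 1` when `‖f‖ ≤ 1`. By Hahn–Banach
`dist (x - λ y₀, J₀) ≤ 1`, and correcting `y₀` by an element of `J₀` gives `y ∈ J` with
`Q g y = Q g x` on `F` and `‖x - λ y‖ < 1 + ε`. The net is indexed by pairs `(F, n)`, with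
`ε = 1 / (n + 1)`. -/

open Filter

section LinearAlgebra

variable {K V ι : Type*} [Field K] [AddCommGroup V] [Module K V] [Fintype ι]

theorem Submodule.exists_apply_eq_sum_of_vanishing (J : Submodule K V) (g : ι → V →ₗ[K] K)
    (f : V →ₗ[K] K) (hf : ∀ z ∈ J, (∀ i, g i z = 0) → f z = 0) :
    ∃ a : ι → K, ∀ z ∈ J, f z = ∑ i, a i * g i z := by
  have hker : ⨅ i, LinearMap.ker (g i ∘ₗ J.subtype) ≤ LinearMap.ker (f ∘ₗ J.subtype) := by
    intro z hz
    simp only [Submodule.mem_iInf, LinearMap.mem_ker, LinearMap.comp_apply] at hz ⊢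
    exact hf z z.2 hz
  obtain ⟨a, ha⟩ :=
    (Submodule.mem_span_range_iff_exists_fun K).1 (mem_span_of_iInf_ker_le_ker hker)
  exact ⟨a, fun z hz => by simpa using (LinearMap.congr_fun ha ⟨z, hz⟩).symm⟩

theorem Submodule.exists_mem_forall_apply_eq (J : Submodule K V) (g : ι → V →ₗ[K] K)
    (c : ι → K) (hc : ∀ a : ι → K, (∀ z ∈ J, ∑ i, a i * g i z = 0) → ∑ i, a i * c i = 0) :
    ∃ y ∈ J, ∀ i, g i y = c i := by
  classical
  set T : J →ₗ[K] ι → K := LinearMap.pi fun i => g i ∘ₗ J.subtype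
  by_contra hnot
  have hcT : c ∉ LinearMap.range T := by
    rintro ⟨y, hy⟩
    exact hnot ⟨y, y.2, fun i => congr_fun hy i⟩
  obtain ⟨φ, hφc, hφT⟩ := Submodule.exists_dual_map_eq_bot_of_notMem hcT inferInstance
  have hφ : ∀ w : ι → K, φ w = ∑ i, φ (Pi.single i 1) * w i := fun w => by
    rw [LinearMap.pi_apply_eq_sum_univ φ w]
    refine Finset.sum_congr rfl fun i _ => ?_
    rw [smul_eq_mul, mul_comm]
    congr 2
    ext j
    simp [Pi.single_apply, eq_comm]
  refine hφc ?_
  rw [hφ]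
  refine hc _ fun z hz => ?_
  have hφTz : φ (T ⟨z, hz⟩) = 0 := by
    rw [← Submodule.mem_bot K, ← hφT]
    exact Submodule.mem_map_of_mem (LinearMap.mem_range_self T _)
  rw [hφ] at hφTz
  simpa [T] using hφTz

end LinearAlgebra

theorem Submodule.Quotient.norm_mk_le_of_forall_dual {X : Type*} [SeminormedAddCommGroup X]
    [NormedSpace ℝ X] (M : Submodule ℝ X) (v : X) {r : ℝ}
    (h : ∀ f : X →L[ℝ] ℝ, ‖f‖ ≤ 1 → (∀ z ∈ M, f z = 0) → f v ≤ r) :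
    ‖(Submodule.Quotient.mk v : X ⧸ M)‖ ≤ r := by
  obtain ⟨φ, hφ, hφv⟩ := exists_dual_vector'' ℝ (Submodule.Quotient.mk v : X ⧸ M)
  have hnorm : ‖φ.comp M.mkQL‖ ≤ 1 :=
    ContinuousLinearMap.opNorm_le_bound _ zero_le_one fun z =>
      calc ‖φ (M.mkQ z)‖ ≤ ‖φ‖ * ‖(Submodule.Quotient.mk z : X ⧸ M)‖ := φ.le_opNorm _
        _ ≤ 1 * ‖z‖ := by gcongr; exact Submodule.Quotient.norm_mk_le M z
  have hM : ∀ z ∈ M, φ.comp M.mkQL z = 0 := fun z hz => by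
    simp [(Submodule.Quotient.mk_eq_zero M).2 hz]
  simpa [hφv] using h _ hnorm hM

section Ideal

variable {X ι : Type*} [SeminormedAddCommGroup X] [NormedSpace ℝ X] [Fintype ι]
  {J : Submodule ℝ X} {Q : (X →L[ℝ] ℝ) →L[ℝ] (X →L[ℝ] ℝ)}

theorem apply_eq_of_idempotent_of_ker (hproj : ∀ f, Q (Q f) = Q f)
    (hker : ∀ f, Q f = 0 ↔ ∀ y ∈ J, f y = 0) (g : X →L[ℝ] ℝ) {y : X} (hy : y ∈ J) :
    Q g y = g y := by
  have h : Q (Q g - g) = 0 := by rw [map_sub, hproj, sub_self]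
  simpa [sub_eq_zero] using (hker _).1 h y hy

theorem exists_mem_forall_apply_eq_apply (hker : ∀ f, Q f = 0 ↔ ∀ y ∈ J, f y = 0)
    (g : ι → X →L[ℝ] ℝ) (x : X) : ∃ y ∈ J, ∀ i, g i y = Q (g i) x := by
  refine J.exists_mem_forall_apply_eq (fun i => (g i : X →ₗ[ℝ] ℝ)) _ fun a ha => ?_
  have hQ : Q (∑ i, a i • g i) = 0 := (hker _).2 fun z hz => by simpa using ha z hz
  simpa using congr($hQ x)

theorem apply_eq_apply_of_vanishing (hker : ∀ f, Q f = 0 ↔ ∀ y ∈ J, f y = 0)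
    {g : ι → X →L[ℝ] ℝ} {x y : X} (hy : y ∈ J) (hyg : ∀ i, g i y = Q (g i) x)
    {f : X →L[ℝ] ℝ} (hf : ∀ z ∈ J, (∀ i, g i z = 0) → f z = 0) : f y = Q f x := by
  obtain ⟨a, ha⟩ :=
    J.exists_apply_eq_sum_of_vanishing (fun i => (g i : X →ₗ[ℝ] ℝ)) (f : X →ₗ[ℝ] ℝ) hf
  have hQ : Q (f - ∑ i, a i • g i) = 0 :=
    (hker _).2 fun z hz => by simpa [sub_eq_zero] using ha z hz
  rw [map_sub, sub_eq_zero] at hQ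
  calc f y = ∑ i, a i * g i y := ha y hy
    _ = Q f x := by simp [hQ, hyg]

theorem exists_mem_forall_apply_eq_norm_sub_smul_lt (hproj : ∀ f, Q (Q f) = Q f)
    (hker : ∀ f, Q f = 0 ↔ ∀ y ∈ J, f y = 0) {lam : ℝ} (hlam : lam ≠ 0)
    (hId : ‖ContinuousLinearMap.id ℝ (X →L[ℝ] ℝ) - lam • Q‖ ≤ 1) {x : X} (hx : ‖x‖ ≤ 1)
    (g : ι → X →L[ℝ] ℝ) {ε : ℝ} (hε : 0 < ε) :
    ∃ y ∈ J, (∀ i, Q (g i) y = Q (g i) x) ∧ ‖x - lam • y‖ < 1 + ε := by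
  obtain ⟨y₀, hy₀J, hy₀g⟩ := exists_mem_forall_apply_eq_apply hker g x
  set J₀ := J ⊓ ⨅ i, (g i).ker
  have hmem₀ : ∀ {z}, z ∈ J₀ ↔ z ∈ J ∧ ∀ i, g i z = 0 := by
    simp [J₀, Submodule.mem_iInf]
  have hdist : ‖(Submodule.Quotient.mk (x - lam • y₀) : X ⧸ J₀)‖ ≤ 1 := by
    refine Submodule.Quotient.norm_mk_le_of_forall_dual _ _ fun f hf hfJ₀ => ?_
    have hfy₀ : f y₀ = Q f x :=
      apply_eq_apply_of_vanishing hker hy₀J hy₀g fun z hz hzg => hfJ₀ z (hmem₀.2 ⟨hz, hzg⟩)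
    calc f (x - lam • y₀) = (ContinuousLinearMap.id ℝ (X →L[ℝ] ℝ) - lam • Q) f x := by
          simp [hfy₀]
      _ ≤ ‖ContinuousLinearMap.id ℝ (X →L[ℝ] ℝ) - lam • Q‖ * ‖f‖ * ‖x‖ :=
          (Real.le_norm_self _).trans (ContinuousLinearMap.le_opNorm₂ _ _ _)
      _ ≤ 1 * 1 * 1 := by gcongr
      _ = 1 := by ring
  obtain ⟨m, hm, hm_lt⟩ :=
    Submodule.Quotient.norm_mk_lt (Submodule.Quotient.mk (x - lam • y₀) : X ⧸ J₀) hε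
  obtain ⟨hmJ, hmg⟩ := hmem₀.1 ((Submodule.Quotient.eq J₀).1 hm.symm)
  refine ⟨y₀ + lam⁻¹ • (x - lam • y₀ - m), J.add_mem hy₀J (J.smul_mem _ hmJ), fun i => ?_, ?_⟩
  · rw [apply_eq_of_idempotent_of_ker hproj hker _ (J.add_mem hy₀J (J.smul_mem _ hmJ))]
    simp [hmg i, hy₀g i]
  · have hsub : x - lam • (y₀ + lam⁻¹ • (x - lam • y₀ - m)) = m := by
      rw [smul_add, smul_smul, mul_inv_cancel₀ hlam, one_smul]
      abel
    rw [hsub]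
    linarith

end Ideal

theorem stmt5_general {X : Type u} [NormedAddCommGroup X] [NormedSpace ℝ X]
    (J : Submodule ℝ X)
    (Q : (X →L[ℝ] ℝ) →L[ℝ] (X →L[ℝ] ℝ))
    (hproj : ∀ f, Q (Q f) = Q f)
    (hker : ∀ f, Q f = 0 ↔ ∀ y ∈ J, f y = 0)
    (lam : ℝ) (hlam0 : 0 < lam)
    (hId : ‖ContinuousLinearMap.id ℝ (X →L[ℝ] ℝ) - lam • Q‖ ≤ 1) :
    ∀ x : X, ‖x‖ ≤ 1 →
      ∃ (ι : Type u) (l : Filter ι) (y : ι → X), l.NeBot ∧ (∀ α, y α ∈ J) ∧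
        (∀ g : X →L[ℝ] ℝ, Tendsto (fun α => Q g (y α)) l (nhds (Q g x))) ∧
        limsup (fun α => ‖x - lam • y α‖) l ≤ 1 := by
  classical
  intro x hx
  choose y hyJ hyQ hy_lt using fun p : Finset (X →L[ℝ] ℝ) × ℕ =>
    exists_mem_forall_apply_eq_norm_sub_smul_lt hproj hker hlam0.ne' hId hx
      ((↑) : p.1 → X →L[ℝ] ℝ) (Nat.one_div_pos_of_nat (n := p.2))
  refine ⟨_, atTop, y, atTop_neBot, hyJ, fun g => ?_, ?_⟩
  · refine tendsto_const_nhds.congr' (eventually_atTop.2 ⟨({g}, 0), fun p hp => ?_⟩)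
    exact (hyQ p ⟨g, Finset.singleton_subset_iff.1 hp.1⟩).symm
  · have hε : Tendsto (fun p : Finset (X →L[ℝ] ℝ) × ℕ => 1 + 1 / ((p.2 : ℝ) + 1)) atTop
        (nhds 1) := by
      rw [← prod_atTop_atTop_eq]
      simpa using
        ((tendsto_one_div_add_atTop_nhds_zero_nat (𝕜 := ℝ)).comp tendsto_snd).const_add 1
    calc limsup (fun p => ‖x - lam • y p‖) atTop
        ≤ limsup (fun p : Finset (X →L[ℝ] ℝ) × ℕ => 1 + 1 / ((p.2 : ℝ) + 1)) atTop :=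
          limsup_le_limsup (Eventually.of_forall fun p => (hy_lt p).le)
            (isCoboundedUnder_le_of_le atTop fun p => norm_nonneg _) hε.isBoundedUnder_le
      _ = 1 := hε.limsup_eq

theorem stmt5 {X : Type u} [NormedAddCommGroup X] [NormedSpace ℝ X] [CompleteSpace X]
    (J : Submodule ℝ X) (hJc : IsClosed (J : Set X))
    (Q : (X →L[ℝ] ℝ) →L[ℝ] (X →L[ℝ] ℝ))
    (hproj : ∀ f, Q (Q f) = Q f) (hQnorm : ‖Q‖ ≤ 1)
    (hker : ∀ f, Q f = 0 ↔ ∀ y ∈ J, f y = 0)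
    (lam : ℝ) (hlam0 : 0 < lam) (hlam2 : lam ≤ 2)
    (hId : ‖ContinuousLinearMap.id ℝ (X →L[ℝ] ℝ) - lam • Q‖ ≤ 1) :
    ∀ x : X, ‖x‖ ≤ 1 →
      ∃ (ι : Type u) (l : Filter ι) (y : ι → X), l.NeBot ∧ (∀ α, y α ∈ J) ∧
        (∀ g : X →L[ℝ] ℝ, Tendsto (fun α => Q g (y α)) l (nhds (Q g x))) ∧
        limsup (fun α => ‖x - lam • y α‖) l ≤ 1 :=
  stmt5_general J Q hproj hker lam hlam0 hId
end

section
/- Let $E$ be a Banach space and $C\in(0,1]$. If $E$ is an $M(1,C)$-ideal in $E^{**}$ (under the canonical decomposition $E^{***}=E^*\oplus E^\perp$ with projection $\mathcal{Q}$ satisfying the $M(1,C)$-inequality), then for all $x\in S_E$, $x^{**}\in S_{E^{**}}$ and $\varepsilon>0$ there exists $x_0\in E$ with $\|x+Cx^{**}-x_0\|<1+\varepsilon$ and $\|-x+Cx^{**}-x_0\|<1+\varepsilon$. -/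
open NormedSpace

/-- Instance-finding repair: the operator norm on the triple dual (formerly found through
`NormedSpace.Dual`'s own instances). -/
noncomputable instance tripleDualSeminormedAddCommGroup (𝕜 : Type*) [NontriviallyNormedField 𝕜]
    (E : Type*) [SeminormedAddCommGroup E] [NormedSpace 𝕜 E] :
    SeminormedAddCommGroup (StrongDual 𝕜 (StrongDual 𝕜 (StrongDual 𝕜 E))) :=
  ContinuousLinearMap.toSeminormedAddCommGroup (E := StrongDual 𝕜 (StrongDual 𝕜 E)) (F := 𝕜)
    (σ₁₂ := RingHom.id 𝕜)

/-- The canonical projection on `E***` with range (the canonical image of) `E*`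
and kernel the annihilator of `E`. -/
noncomputable def triQ (E : Type*) [NormedAddCommGroup E] [NormedSpace ℝ E]
    (f : StrongDual ℝ (StrongDual ℝ (StrongDual ℝ E))) : StrongDual ℝ (StrongDual ℝ (StrongDual ℝ E)) :=
  inclusionInDoubleDual ℝ (StrongDual ℝ E) (f.comp (inclusionInDoubleDual ℝ E))

/-!
Suppose no `x₀` works, and put `a = x + C x**`, `b = -x + C x**`. Hahn–Banach in `E** × E**`
(max norm) separates the open ball of radius `1 + ε` from the convex set
`{(a - x₀, b - x₀) : x₀ ∈ E}`; the separating functional splits as `(f₁, f₂) ∈ E*** × E***`,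
where `f₁ + f₂` annihilates `E` and `(1 + ε)(‖f₁‖ + ‖f₂‖) ≤ f₁ a + f₂ b`. Annihilating `E` means
`𝒬f₂ = -𝒬f₁`, so `f₁ a + f₂ b = 𝒬f₁ x - 𝒬f₂ x + C ((f₁ - 𝒬f₁) x** + (f₂ - 𝒬f₂) x**)`,
which the `M(1,C)`-inequality bounds by `‖f₁‖ + ‖f₂‖`: a contradiction.
-/

namespace StrongDual

variable {D D' : Type*} [NormedAddCommGroup D] [NormedSpace ℝ D]
  [NormedAddCommGroup D'] [NormedSpace ℝ D']

theorem apply_le_norm (f : StrongDual ℝ D) {y : D} (hy : ‖y‖ ≤ 1) : f y ≤ ‖f‖ :=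
  (Real.le_norm_self _).trans (by simpa using f.le_opNorm_of_le hy)

theorem norm_le_of_forall_apply_le (f : StrongDual ℝ D) {M : ℝ}
    (h : ∀ y : D, ‖y‖ < 1 → f y ≤ M) : ‖f‖ ≤ M := by
  by_contra! hM
  obtain ⟨y, hy, hMy⟩ := f.exists_lt_apply_of_lt_opNorm hM
  rcases le_or_gt 0 (f y) with hpos | hneg
  · exact (h y hy).not_gt (by rwa [Real.norm_of_nonneg hpos] at hMy)
  · refine (h (-y) (by rwa [norm_neg])).not_gt ?_
    rwa [Real.norm_of_nonpos hneg.le, ← map_neg] at hMy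

theorem norm_add_norm_le_of_forall_apply_add_apply_le (f : StrongDual ℝ D)
    (f' : StrongDual ℝ D') {M : ℝ} (h : ∀ y z, ‖y‖ < 1 → ‖z‖ < 1 → f y + f' z ≤ M) :
    ‖f‖ + ‖f'‖ ≤ M := by
  have hf : ∀ z : D', ‖z‖ < 1 → f' z ≤ M - ‖f‖ := fun z hz =>
    le_sub_comm.mp (f.norm_le_of_forall_apply_le fun y hy => le_sub_iff_add_le.mpr (h y z hy hz))
  linarith [f'.norm_le_of_forall_apply_le hf]

end StrongDual

theorem eq_zero_of_forall_mul_le {𝕜 : Type*} [Field 𝕜] [LinearOrder 𝕜] [IsStrictOrderedRing 𝕜]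
    {x y : 𝕜} (h : ∀ c : 𝕜, c * x ≤ y) : x = 0 := by
  by_contra hx
  have := h ((y + 1) / x)
  rw [div_mul_cancel₀ _ hx] at this
  linarith

theorem exists_separating_pair {D : Type*} [NormedAddCommGroup D] [NormedSpace ℝ D]
    (S : Submodule ℝ D) {a b : D} {r : ℝ} (hr : 0 < r)
    (h : ∀ s ∈ S, r ≤ max ‖a - s‖ ‖b - s‖) :
    ∃ f₁ f₂ : StrongDual ℝ D, (∀ s ∈ S, f₁ s + f₂ s = 0) ∧ 0 < f₁ a + f₂ b ∧
      r * (‖f₁‖ + ‖f₂‖) ≤ f₁ a + f₂ b := by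
  set K : Set (D × D) := (fun s => (a - s, b - s)) '' S
  have hK : Convex ℝ K := by
    have hK_eq :
        K = (fun p => (a, b) + p) '' ((-LinearMap.id.prod LinearMap.id : D →ₗ[ℝ] D × D) '' S) := by
      rw [Set.image_image]
      refine congrArg (· '' _) (funext fun s => ?_)
      simp [sub_eq_add_neg]
    rw [hK_eq]
    exact (S.convex.linear_image _).translate _
  have hdisj : Disjoint (Metric.ball 0 r) K := by
    rw [Set.disjoint_right]
    rintro _ ⟨s, hs, rfl⟩
    rw [Metric.mem_ball, dist_zero_right, Prod.norm_mk]
    exact (h s hs).not_gt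
  obtain ⟨f, u, hball, hKu⟩ :=
    geometric_hahn_banach_open (convex_ball 0 r) Metric.isOpen_ball hK hdisj
  set f₁ := f.comp (.inl ℝ D D)
  set f₂ := f.comp (.inr ℝ D D)
  have hf : ∀ y z, f (y, z) = f₁ y + f₂ z := fun y z => (f.comp_inl_add_comp_inr (y, z)).symm
  have hu : 0 < u := by simpa using hball 0 (Metric.mem_ball_self hr)
  have hab : u ≤ f₁ a + f₂ b := by simpa [hf] using hKu _ ⟨0, S.zero_mem, rfl⟩
  have hvanish : ∀ s ∈ S, f₁ s + f₂ s = 0 := fun s hs =>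
    eq_zero_of_forall_mul_le (y := f₁ a + f₂ b - u) fun c => by
      have := hKu _ ⟨c • s, S.smul_mem c hs, rfl⟩
      simp only [hf, map_sub, map_smul, smul_eq_mul] at this
      linarith
  have hnorm : ‖f₁‖ + ‖f₂‖ ≤ u / r :=
    StrongDual.norm_add_norm_le_of_forall_apply_add_apply_le f₁ f₂ fun y z hy hz => by
      have hyz : (r • y, r • z) ∈ Metric.ball (0 : D × D) r := by
        rw [mem_ball_zero_iff, Prod.norm_mk, norm_smul, norm_smul, Real.norm_of_nonneg hr.le]
        exact max_lt (mul_lt_of_lt_one_right hr hy) (mul_lt_of_lt_one_right hr hz)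
      have := hball _ hyz
      rw [hf, map_smul, map_smul, smul_eq_mul, smul_eq_mul] at this
      rw [le_div_iff₀ hr]
      linarith
  refine ⟨f₁, f₂, hvanish, hu.trans_le hab, ?_⟩
  rw [le_div_iff₀ hr] at hnorm
  linarith

def IsM1CIdealInBidual (E : Type*) [NormedAddCommGroup E] [NormedSpace ℝ E] (C : ℝ) : Prop :=
  ∀ f : StrongDual ℝ (StrongDual ℝ (StrongDual ℝ E)), ‖triQ E f‖ + C * ‖f - triQ E f‖ ≤ ‖f‖

section

variable {E : Type*} [NormedAddCommGroup E] [NormedSpace ℝ E]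

local notation "J" => inclusionInDoubleDual ℝ E

theorem triQ_apply_inclusionInDoubleDual (f : StrongDual ℝ (StrongDual ℝ (StrongDual ℝ E)))
    (x : E) : triQ E f (J x) = f (J x) :=
  rfl

theorem triQ_add_triQ_eq_zero {f₁ f₂ : StrongDual ℝ (StrongDual ℝ (StrongDual ℝ E))}
    (hf : ∀ x : E, f₁ (J x) + f₂ (J x) = 0) : triQ E f₁ + triQ E f₂ = 0 := by
  have : f₁.comp J + f₂.comp J = 0 := ContinuousLinearMap.ext hf
  rw [triQ, triQ, ← map_add, this, map_zero]

theorem IsM1CIdealInBidual.apply_add_apply_le {C : ℝ} (hE : IsM1CIdealInBidual E C) (hC : 0 ≤ C)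
    {f₁ f₂ : StrongDual ℝ (StrongDual ℝ (StrongDual ℝ E))} (hf : ∀ x : E, f₁ (J x) + f₂ (J x) = 0)
    {x : E} (hx : ‖x‖ ≤ 1) {xss : StrongDual ℝ (StrongDual ℝ E)} (hxss : ‖xss‖ ≤ 1) :
    f₁ (J x + C • xss) + f₂ (-J x + C • xss) ≤ ‖f₁‖ + ‖f₂‖ := by
  have hJx : ‖J x‖ ≤ 1 := (double_dual_bound ℝ E x).trans hx
  have hQ : triQ E f₁ xss + triQ E f₂ xss = 0 := by
    rw [← add_apply, triQ_add_triQ_eq_zero hf, zero_apply]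
  -- `E***` carries the norm instance `tripleDualSeminormedAddCommGroup`, for which the generic
  -- `sub_apply` / `neg_apply` do not fire; the pointwise identities still hold by `rfl`.
  have hsub : ∀ f : StrongDual ℝ (StrongDual ℝ (StrongDual ℝ E)),
      (f - triQ E f) xss = f xss - triQ E f xss := fun _ => rfl
  have hneg : (-triQ E f₂) (J x) = -triQ E f₂ (J x) := rfl
  calc f₁ (J x + C • xss) + f₂ (-J x + C • xss)
      = triQ E f₁ (J x) + (-triQ E f₂) (J x)
          + C * ((f₁ - triQ E f₁) xss + (f₂ - triQ E f₂) xss) := by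
        simp only [map_add, map_smul, smul_eq_mul, hsub, hneg,
          triQ_apply_inclusionInDoubleDual]
        linear_combination C * hQ + map_neg f₂ (J x)
    _ ≤ ‖triQ E f₁‖ + ‖-triQ E f₂‖ + C * (‖f₁ - triQ E f₁‖ + ‖f₂ - triQ E f₂‖) := by
        gcongr <;> apply StrongDual.apply_le_norm (D := StrongDual ℝ (StrongDual ℝ E)) <;>
          assumption
    _ ≤ ‖f₁‖ + ‖f₂‖ := by
        rw [norm_neg]
        linarith [hE f₁, hE f₂]

end

theorem stmt7_general {E : Type*} [NormedAddCommGroup E] [NormedSpace ℝ E]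
    (C : ℝ) (hC0 : 0 < C)
    (hM1C : ∀ f : StrongDual ℝ (StrongDual ℝ (StrongDual ℝ E)),
      ‖triQ E f‖ + C * ‖f - triQ E f‖ ≤ ‖f‖) :
    ∀ x : E, ‖x‖ = 1 → ∀ xss : StrongDual ℝ (StrongDual ℝ E), ‖xss‖ = 1 → ∀ ε : ℝ, 0 < ε →
      ∃ x₀ : E,
        ‖inclusionInDoubleDual ℝ E x + C • xss - inclusionInDoubleDual ℝ E x₀‖ < 1 + ε ∧
        ‖-(inclusionInDoubleDual ℝ E x) + C • xss - inclusionInDoubleDual ℝ E x₀‖ < 1 + ε := by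
  intro x hx xss hxss ε hε
  by_contra hfar
  obtain ⟨f₁, f₂, hvanish, hpos, hsep⟩ :=
    exists_separating_pair (LinearMap.range (inclusionInDoubleDual ℝ E : E →ₗ[ℝ] _))
      (a := inclusionInDoubleDual ℝ E x + C • xss) (b := -inclusionInDoubleDual ℝ E x + C • xss)
      (r := 1 + ε) (by linarith) fun _ ⟨x₀, hx₀⟩ => not_lt.mp fun hlt => by
        subst hx₀
        exact hfar ⟨x₀, max_lt_iff.mp hlt⟩
  have hle := IsM1CIdealInBidual.apply_add_apply_le hM1C hC0.le
    (fun x => hvanish _ ⟨x, rfl⟩) hx.le hxss.le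
  have hnorm_pos : 0 < ‖f₁‖ + ‖f₂‖ := hpos.trans_le hle
  linarith [mul_pos hε hnorm_pos]

theorem stmt7 {E : Type*} [NormedAddCommGroup E] [NormedSpace ℝ E] [CompleteSpace E]
    (C : ℝ) (hC0 : 0 < C) (hC1 : C ≤ 1)
    (hM1C : ∀ f : StrongDual ℝ (StrongDual ℝ (StrongDual ℝ E)),
      ‖triQ E f‖ + C * ‖f - triQ E f‖ ≤ ‖f‖) :
    ∀ x : E, ‖x‖ = 1 → ∀ xss : StrongDual ℝ (StrongDual ℝ E), ‖xss‖ = 1 → ∀ ε : ℝ, 0 < ε →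
      ∃ x₀ : E,
        ‖inclusionInDoubleDual ℝ E x + C • xss - inclusionInDoubleDual ℝ E x₀‖ < 1 + ε ∧
        ‖-(inclusionInDoubleDual ℝ E x) + C • xss - inclusionInDoubleDual ℝ E x₀‖ < 1 + ε :=
  stmt7_general C hC0 hM1C
end

section
/- Let $E,F$ be Banach spaces and $(L_\beta)$ a net of compact operators on $F$ with $\sup_\beta\|L_\beta\|\le 1$, $L_\beta y\to y$ for all $y\in F$, and such that $(L_\beta)$ converges weak-star in $\mathcal{K}(F)^{**}$ to some $L_0$. Let $V$ be the space of bounded linear operators from a Banach space $Z$ to $F$, and $W\subset V$ the closed subspace of compact operators. Define $\Lambda:V^*\to V^*$ by $\Lambda(f)(T)=\lim_\beta f(L_\beta\circ T)$. Then $\Lambda$ is a well-defined bounded linear map with $\|\Lambda\|\le 1$ and $\Lambda(f)(T)=f(T)$ for every compact $T\in W$ and $f\in V^*$. -/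
/-!
For fixed `f` and `T`, the number `f (L β ∘ T)` is a fixed functional on `F →L[ℝ] F` evaluated
at `L β`, so it converges by the weak-star hypothesis. The functionals `T ↦ f (L β ∘ T)` have norm
at most `‖f‖`, so their pointwise limit is again a functional of norm at most `‖f‖`, and it depends
linearly on `f`; this is `Λ f`. For compact `T`, the net `L β` is equicontinuous, so its pointwise
convergence to the identity is uniform on the compact closure of the image of the unit ball
under `T`; hence `L β ∘ T → T` in norm and `Λ f T = f T`.
-/

namespace NormedSpace

/-- The topological dual of a seminormed space `E` (as in older Mathlib, now removed). -/
abbrev Dual (𝕜 : Type*) [NontriviallyNormedField 𝕜] (E : Type*) [SeminormedAddCommGroup E]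
    [NormedSpace 𝕜 E] : Type _ :=
  E →L[𝕜] 𝕜

end NormedSpace

open Filter NormedSpace

open Topology

section PointwiseLimits

variable {𝕜 E F : Type*} [NontriviallyNormedField 𝕜] [SeminormedAddCommGroup E] [NormedSpace 𝕜 E]
  [NormedAddCommGroup F] [NormedSpace 𝕜 F] {ι : Type*} {l : Filter ι}

theorem ContinuousLinearMap.tendstoUniformlyOn_of_tendsto_of_norm_le {L : ι → E →L[𝕜] F}
    {A : E →L[𝕜] F} {C : ℝ} (hL : ∀ i, ‖L i‖ ≤ C)
    (hpt : ∀ x, Tendsto (fun i => L i x) l (𝓝 (A x))) {K : Set E} (hK : IsCompact K) :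
    TendstoUniformlyOn (fun i => ⇑(L i)) A l K := by
  have hequi : Equicontinuous (fun i => ⇑(L i)) :=
    ((NormedSpace.equicontinuous_TFAE L).out 5 1).mp (show ∃ C, ∀ i, ‖L i‖ ≤ C from ⟨C, hL⟩)
  have hunif := (EquicontinuousOn.tendsto_uniformOnFun_iff_pi' (𝔖 := {K}) (by simpa using hK)
    (by simpa using hequi.equicontinuousOn K) l A).mpr (tendsto_pi_nhds.2 fun x => hpt x)
  rw [UniformOnFun.tendsto_iff_tendstoUniformlyOn] at hunif
  exact hunif K rfl

theorem ContinuousLinearMap.exists_tendsto_of_norm_le [l.NeBot] {g : ι → E →L[𝕜] F} {C : ℝ}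
    (hg : ∀ i, ‖g i‖ ≤ C) (hconv : ∀ x, ∃ y, Tendsto (fun i => g i x) l (𝓝 y)) :
    ∃ φ : E →L[𝕜] F, ‖φ‖ ≤ C ∧ ∀ x, Tendsto (fun i => g i x) l (𝓝 (φ x)) := by
  choose y hy using hconv
  have hC : 0 ≤ C := (norm_nonneg _).trans (hg l.nonempty_of_neBot.some)
  refine ⟨ofTendstoOfBoundedRange y g (tendsto_pi_nhds.2 hy) ?_, ?_, hy⟩
  · exact isBounded_iff_forall_norm_le.2 ⟨C, by rintro _ ⟨i, rfl⟩; exact hg i⟩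
  · refine opNorm_le_bound _ hC fun x => le_of_tendsto (hy x).norm (.of_forall fun i => ?_)
    exact (g i).le_of_opNorm_le (hg i) x

end PointwiseLimits

theorem IsCompactOperator.tendsto_comp_of_tendsto_of_norm_le {𝕜 E F G ι : Type*} [RCLike 𝕜]
    [NormedAddCommGroup E] [NormedSpace 𝕜 E] [NormedAddCommGroup F] [NormedSpace 𝕜 F]
    [SeminormedAddCommGroup G] [NormedSpace 𝕜 G] {l : Filter ι} {T : G →L[𝕜] E}
    (hT : IsCompactOperator T) {L : ι → E →L[𝕜] F} {A : E →L[𝕜] F} {C : ℝ}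
    (hL : ∀ i, ‖L i‖ ≤ C) (hpt : ∀ x, Tendsto (fun i => L i x) l (𝓝 (A x))) :
    Tendsto (fun i => (L i).comp T) l (𝓝 (A.comp T)) := by
  have hunif := Metric.tendstoUniformlyOn_iff.1 <|
    ContinuousLinearMap.tendstoUniformlyOn_of_tendsto_of_norm_le hL hpt
      (hT.isCompact_closure_image_closedBall 1)
  refine Metric.tendsto_nhds.2 fun ε hε => ?_
  filter_upwards [hunif (ε / 2) (half_pos hε)] with i hi
  rw [dist_eq_norm']
  refine lt_of_le_of_lt ?_ (half_lt_self hε)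
  refine ContinuousLinearMap.opNorm_le_of_unit_norm (half_pos hε).le fun x hx => ?_
  simpa [dist_eq_norm] using (hi (T x) (subset_closure ⟨x, by simp [hx], rfl⟩)).le

theorem ContinuousLinearMap.exists_dual_tendsto_of_norm_le {𝕜 V W ι : Type*}
    [NontriviallyNormedField 𝕜] [SeminormedAddCommGroup V] [NormedSpace 𝕜 V]
    [SeminormedAddCommGroup W] [NormedSpace 𝕜 W] {l : Filter ι} [l.NeBot]
    {A : ι → V →L[𝕜] W} {C : ℝ} (hA : ∀ i, ‖A i‖ ≤ C)
    (hconv : ∀ (f : Dual 𝕜 W) v, ∃ a, Tendsto (fun i => f (A i v)) l (𝓝 a)) :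
    ∃ Λ : Dual 𝕜 W →L[𝕜] Dual 𝕜 V,
      ‖Λ‖ ≤ C ∧ ∀ f v, Tendsto (fun i => f (A i v)) l (𝓝 (Λ f v)) := by
  have hC : 0 ≤ C := (norm_nonneg _).trans (hA l.nonempty_of_neBot.some)
  have hbound (f : Dual 𝕜 W) (i : ι) : ‖f.comp (A i)‖ ≤ C * ‖f‖ :=
    (opNorm_comp_le _ _).trans (by rw [mul_comm]; gcongr; exact hA i)
  choose Φ hΦnorm hΦ using fun f => exists_tendsto_of_norm_le (hbound f) (hconv f)
  let Λ : Dual 𝕜 W →ₗ[𝕜] Dual 𝕜 V :=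
    { toFun := Φ
      map_add' := fun f g => ext fun v =>
        tendsto_nhds_unique (hΦ (f + g) v) ((hΦ f v).add (hΦ g v))
      map_smul' := fun c f => ext fun v =>
        tendsto_nhds_unique (hΦ (c • f) v) ((hΦ f v).const_smul c) }
  exact ⟨Λ.mkContinuous C hΦnorm, LinearMap.mkContinuous_norm_le _ hC _, hΦ⟩

theorem stmt10_general {F : Type*} [NormedAddCommGroup F] [NormedSpace ℝ F]
    {Z : Type*} [NormedAddCommGroup Z] [NormedSpace ℝ Z]
    {ι : Type*} [Preorder ι] [IsDirected ι (· ≤ ·)] [Nonempty ι]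
    (L : ι → F →L[ℝ] F)
    (hnorm : ∀ β, ‖L β‖ ≤ 1)
    (hpt : ∀ y : F, Tendsto (fun β => L β y) atTop (nhds y))
    (hwstar : ∀ ψ : Dual ℝ (F →L[ℝ] F), ∃ l : ℝ, Tendsto (fun β => ψ (L β)) atTop (nhds l)) :
    ∃ Λ : Dual ℝ (Z →L[ℝ] F) →L[ℝ] Dual ℝ (Z →L[ℝ] F),
      (∀ (f : Dual ℝ (Z →L[ℝ] F)) (T : Z →L[ℝ] F),
        Tendsto (fun β => f ((L β).comp T)) atTop (nhds (Λ f T))) ∧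
      ‖Λ‖ ≤ 1 ∧
      (∀ (f : Dual ℝ (Z →L[ℝ] F)) (T : Z →L[ℝ] F), IsCompactOperator T → Λ f T = f T) := by
  open ContinuousLinearMap in
  have hcompL (β : ι) : ‖compL ℝ Z F F (L β)‖ ≤ 1 :=
    opNorm_le_bound _ zero_le_one fun T =>
      (opNorm_comp_le _ _).trans <| by
        simpa using mul_le_mul_of_nonneg_right (hnorm β) (norm_nonneg T)
  obtain ⟨Λ, hΛnorm, hΛ⟩ := ContinuousLinearMap.exists_dual_tendsto_of_norm_le hcompL
    fun f T => hwstar (f.comp ((ContinuousLinearMap.compL ℝ Z F F).flip T))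
  refine ⟨Λ, hΛ, hΛnorm, fun f T hT => tendsto_nhds_unique (hΛ f T) ?_⟩
  have hLT := hT.tendsto_comp_of_tendsto_of_norm_le hnorm (A := ContinuousLinearMap.id ℝ F) hpt
  rw [ContinuousLinearMap.id_comp] at hLT
  exact (f.continuous.tendsto T).comp hLT

theorem stmt10 {F : Type*} [NormedAddCommGroup F] [NormedSpace ℝ F] [CompleteSpace F]
    {Z : Type*} [NormedAddCommGroup Z] [NormedSpace ℝ Z] [CompleteSpace Z]
    {ι : Type*} [Preorder ι] [IsDirected ι (· ≤ ·)] [Nonempty ι]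
    (L : ι → F →L[ℝ] F) (hcpt : ∀ β, IsCompactOperator (L β))
    (hnorm : ∀ β, ‖L β‖ ≤ 1)
    (hpt : ∀ y : F, Tendsto (fun β => L β y) atTop (nhds y))
    (hwstar : ∀ ψ : Dual ℝ (F →L[ℝ] F), ∃ l : ℝ, Tendsto (fun β => ψ (L β)) atTop (nhds l)) :
    ∃ Λ : Dual ℝ (Z →L[ℝ] F) →L[ℝ] Dual ℝ (Z →L[ℝ] F),
      (∀ (f : Dual ℝ (Z →L[ℝ] F)) (T : Z →L[ℝ] F),
        Tendsto (fun β => f ((L β).comp T)) atTop (nhds (Λ f T))) ∧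
      ‖Λ‖ ≤ 1 ∧
      (∀ (f : Dual ℝ (Z →L[ℝ] F)) (T : Z →L[ℝ] F), IsCompactOperator T → Λ f T = f T) :=
  stmt10_general L hnorm hpt hwstar
end

section
/- Let $E$ be a Banach space with a shrinking metric compact approximation of the identity $(K_\alpha)$ (compact operators, $\sup_\alpha\|K_\alpha\|\le 1$, $K_\alpha^*x^*\to x^*$ for all $x^*\in E^*$). Then for every Banach space $F$, the space of compact operators $\mathcal{K}(E,F)$ is an ideal in $\mathcal{L}(E,F)$: assuming further that $(K_\alpha)$ converges weak-star in $\mathcal{K}(E)^{**}$, the map $\Lambda(f)(T)=\lim_\alpha f(T\circ K_\alpha)$ defines a norm-one projection on $\mathcal{L}(E,F)^*$ with kernel $\mathcal{K}(E,F)^\perp$. -/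
/-!
For compact `S`, the set `{y ∘ S : ‖y‖ ≤ 1}` is totally bounded in `E*` (one half of Schauder's
theorem). The maps `g ↦ g ∘ K α` on `E*` are `1`-Lipschitz and converge pointwise to the identity,
hence uniformly on that set, and by Hahn–Banach this says `‖S ∘ K α - S‖ → 0`. The operator `Λ` is
the weak-star limit of the contractions `f ↦ f (· ∘ K α)`. It fixes `f` on compact operators, and
since every `T ∘ K α` is compact, `Λ f` only depends on the restriction of `f` to `𝒦(E, F)`; this
gives `Λ ∘ Λ = Λ` and `ker Λ = 𝒦(E, F)^⊥`.
-/

open Filter NormedSpace Metric Set Topology ContinuousLinearMap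
open scoped NNReal

theorem TotallyBounded.tendstoUniformlyOn_of_lipschitzWith {α β ι : Type*}
    [PseudoMetricSpace α] [PseudoMetricSpace β] {l : Filter ι} {F : ι → α → β} {f : α → β}
    {s : Set α} {C D : ℝ≥0} (hs : TotallyBounded s) (hF : ∀ i, LipschitzWith C (F i))
    (hf : LipschitzWith D f) (h : ∀ x ∈ s, Tendsto (fun i => F i x) l (𝓝 (f x))) :
    TendstoUniformlyOn F f l s := by
  rw [Metric.tendstoUniformlyOn_iff]
  intro ε hε
  set δ := ε / (C + D + 1)
  have hδ : 0 < δ := by positivity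
  obtain ⟨t, hts, ht, hst⟩ := finite_approx_of_totallyBounded hs δ hδ
  have hnet : ∀ᶠ i in l, ∀ z ∈ t, dist (F i z) (f z) < δ :=
    (eventually_all_finite ht).2 fun z hz => Metric.tendsto_nhds.1 (h z (hts hz)) δ hδ
  filter_upwards [hnet] with i hi x hx
  obtain ⟨z, hz, hxz⟩ := mem_iUnion₂.1 (hst hx)
  rw [mem_ball] at hxz
  have h₁ : dist (f x) (f z) ≤ D * δ := (hf.dist_le_mul x z).trans (by gcongr)
  have h₂ : dist (F i x) (F i z) ≤ C * δ := (hF i |>.dist_le_mul x z).trans (by gcongr)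
  calc dist (f x) (F i x) ≤ dist (f x) (f z) + dist (f z) (F i z) + dist (F i z) (F i x) :=
        dist_triangle4 _ _ _ _
    _ < D * δ + δ + C * δ := by
        linarith [hi z hz, dist_comm (f z) (F i z), dist_comm (F i z) (F i x)]
    _ = (C + D + 1) * δ := by ring
    _ = ε := mul_div_cancel₀ ε (by positivity)

theorem ContinuousLinearMap.exists_tendsto_of_forall_tendsto₂ {𝕜 X Y G ι : Type*}
    [NontriviallyNormedField 𝕜] [SeminormedAddCommGroup X] [NormedSpace 𝕜 X]
    [SeminormedAddCommGroup Y] [NormedSpace 𝕜 Y] [NormedAddCommGroup G] [NormedSpace 𝕜 G]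
    {l : Filter ι} [l.NeBot] {P : ι → X →L[𝕜] Y →L[𝕜] G} {C : ℝ} (hC : 0 ≤ C)
    (hP : ∀ i, ‖P i‖ ≤ C) (h : ∀ x y, ∃ z, Tendsto (fun i => P i x y) l (𝓝 z)) :
    ∃ B : X →L[𝕜] Y →L[𝕜] G, ‖B‖ ≤ C ∧ ∀ x y, Tendsto (fun i => P i x y) l (𝓝 (B x y)) := by
  choose b hb using h
  let B₀ : X →ₗ[𝕜] Y →ₗ[𝕜] G := LinearMap.mk₂ 𝕜 b
    (fun x x' y => tendsto_nhds_unique (hb _ _) (by simpa using (hb x y).add (hb x' y)))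
    (fun c x y => tendsto_nhds_unique (hb _ _) (by simpa using (hb x y).const_smul c))
    (fun x y y' => tendsto_nhds_unique (hb _ _) (by simpa using (hb x y).add (hb x y')))
    (fun c x y => tendsto_nhds_unique (hb _ _) (by simpa using (hb x y).const_smul c))
  have hB₀ : ∀ x y, ‖B₀ x y‖ ≤ C * ‖x‖ * ‖y‖ := fun x y =>
    le_of_tendsto (hb x y).norm (Eventually.of_forall fun i => (P i).le_of_opNorm₂_le_of_le
      (hP i) le_rfl le_rfl)
  exact ⟨B₀.mkContinuous₂ C hB₀, LinearMap.mkContinuous₂_norm_le _ hC hB₀, hb⟩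

theorem ContinuousLinearMap.norm_compL_flip_apply_le {𝕜 E F G : Type*} [NontriviallyNormedField 𝕜]
    [NormedAddCommGroup E] [NormedSpace 𝕜 E] [NormedAddCommGroup F] [NormedSpace 𝕜 F]
    [NormedAddCommGroup G] [NormedSpace 𝕜 G] (A : E →L[𝕜] F) :
    ‖(compL 𝕜 E F G).flip A‖ ≤ ‖A‖ :=
  calc ‖(compL 𝕜 E F G).flip A‖ ≤ ‖(compL 𝕜 E F G).flip‖ * ‖A‖ := le_opNorm _ _
    _ ≤ 1 * ‖A‖ := by rw [opNorm_flip]; gcongr; exact norm_compL_le 𝕜 E F G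
    _ = ‖A‖ := one_mul _

section RCLike

variable {𝕜 E F : Type*} [RCLike 𝕜] [NormedAddCommGroup E] [NormedSpace 𝕜 E]
  [NormedAddCommGroup F] [NormedSpace 𝕜 F]

theorem ContinuousLinearMap.opNorm_le_of_forall_norm_comp_le {T : E →L[𝕜] F} {M : ℝ}
    (hM : 0 ≤ M) (h : ∀ f : F →L[𝕜] 𝕜, ‖f‖ ≤ 1 → ‖f.comp T‖ ≤ M) : ‖T‖ ≤ M := by
  have hdual : ‖(compL 𝕜 E F 𝕜).flip T‖ ≤ M :=
    opNorm_le_of_unit_norm hM fun f hf => h f hf.le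
  refine opNorm_le_bound _ hM fun x => norm_le_dual_bound 𝕜 _ (by positivity) fun f => ?_
  calc ‖f (T x)‖ = ‖(compL 𝕜 E F 𝕜).flip T f x‖ := rfl
    _ ≤ M * ‖f‖ * ‖x‖ := (le_opNorm₂ _ f x).trans (by gcongr)
    _ = M * ‖x‖ * ‖f‖ := by ring

theorem ContinuousLinearMap.norm_comp_le_of_image_closedBall_subset {S : E →L[𝕜] F}
    {t : Set F} {δ c : ℝ} (hδ : 0 ≤ δ) (hS : S '' closedBall 0 1 ⊆ ⋃ z ∈ t, ball z δ)
    (f : F →L[𝕜] 𝕜) (hc : 0 ≤ c) (hf : ∀ z ∈ t, ‖f z‖ ≤ c) : ‖f.comp S‖ ≤ ‖f‖ * δ + c := by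
  refine opNorm_le_of_unit_norm (by positivity) fun x hx => ?_
  obtain ⟨z, hz, hSxz⟩ :=
    mem_iUnion₂.1 (hS (mem_image_of_mem S (mem_closedBall_zero_iff.2 hx.le)))
  calc ‖f (S x)‖ ≤ ‖f (S x - z)‖ + ‖f z‖ := by
        rw [map_sub]; exact norm_le_norm_sub_add _ _
    _ ≤ ‖f‖ * δ + c := by
        gcongr
        · exact f.le_opNorm_of_le (mem_ball_iff_norm.1 hSxz).le
        · exact hf z hz

theorem IsCompactOperator.totallyBounded_image_comp_closedBall {S : E →L[𝕜] F}
    (hS : IsCompactOperator S) :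
    TotallyBounded ((fun f : F →L[𝕜] 𝕜 => f.comp S) '' closedBall 0 1) := by
  -- Functionals of norm `≤ 1` that nearly agree on a finite net `t` of `S '' closedBall 0 1`
  -- nearly agree after composing with `S`, and their values on `t` lie in a bounded subset of
  -- the finite-dimensional space `t → 𝕜`.
  refine Metric.totallyBounded_iff.2 fun ε hε => ?_
  obtain ⟨C, hC, hSC⟩ := hS.image_closedBall_subset_compact 1
  obtain ⟨t, -, ht, hCt⟩ :=
    finite_approx_of_totallyBounded hC.totallyBounded (ε / 4) (by positivity)
  have := ht.fintype
  let Φ : (F →L[𝕜] 𝕜) →L[𝕜] (t → 𝕜) := pi fun z => apply 𝕜 𝕜 (z : F)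
  have hΦ : TotallyBounded (Φ '' closedBall 0 1) :=
    (Φ.lipschitz.isBounded_image isBounded_closedBall).isCompact_closure.totallyBounded.subset
      subset_closure
  obtain ⟨Y, hYB, hY, hcover⟩ := Set.exists_subset_image_finite_and.1
    (finite_approx_of_totallyBounded hΦ (ε / 4) (by positivity))
  refine ⟨(fun f => f.comp S) '' Y, hY.image _, ?_⟩
  rintro _ ⟨f, hf, rfl⟩
  obtain ⟨_, ⟨g, hg, rfl⟩, hfg⟩ := mem_iUnion₂.1 (hcover (mem_image_of_mem Φ hf))
  refine mem_iUnion₂.2 ⟨g.comp S, mem_image_of_mem _ hg, ?_⟩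
  have hfg_norm : ‖f - g‖ ≤ 2 := (norm_sub_le f g).trans <| by
    linarith [mem_closedBall_zero_iff.1 hf, mem_closedBall_zero_iff.1 (hYB hg)]
  have hfg_net : ∀ z ∈ t, ‖(f - g) z‖ ≤ ε / 4 := fun z hz =>
    calc ‖(f - g) z‖ = ‖(Φ f - Φ g) ⟨z, hz⟩‖ := by simp [Φ]
      _ ≤ ‖Φ f - Φ g‖ := norm_le_pi_norm _ _
      _ ≤ ε / 4 := (mem_ball_iff_norm.1 hfg).le
  rw [mem_ball, dist_eq_norm, ← sub_comp]
  calc ‖(f - g).comp S‖ ≤ ‖f - g‖ * (ε / 4) + ε / 4 :=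
        norm_comp_le_of_image_closedBall_subset (by positivity) (hSC.trans hCt) _
          (by positivity) hfg_net
    _ ≤ 2 * (ε / 4) + ε / 4 := by gcongr
    _ < ε := by linarith

theorem IsCompactOperator.tendsto_comp_of_tendsto_comp_dual {ι : Type*} {l : Filter ι}
    {K : ι → E →L[𝕜] E} {C : ℝ≥0} (hK : ∀ i, ‖K i‖ ≤ C)
    (hKdual : ∀ g : E →L[𝕜] 𝕜, Tendsto (fun i => g.comp (K i)) l (𝓝 g))
    {S : E →L[𝕜] F} (hS : IsCompactOperator S) :
    Tendsto (fun i => S.comp (K i)) l (𝓝 S) := by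
  have hLip : ∀ i, LipschitzWith C ((compL 𝕜 E E 𝕜).flip (K i)) := fun i =>
    (lipschitz _).weaken (NNReal.coe_le_coe.1 ((norm_compL_flip_apply_le _).trans (hK i)))
  have hunif := hS.totallyBounded_image_comp_closedBall.tendstoUniformlyOn_of_lipschitzWith hLip
    LipschitzWith.id fun g _ => hKdual g
  rw [Metric.tendsto_nhds]
  intro ε hε
  filter_upwards [Metric.tendstoUniformlyOn_iff.1 hunif (ε / 2) (by positivity)] with i hi
  rw [dist_eq_norm]
  refine (opNorm_le_of_forall_norm_comp_le (by positivity) fun f hf => ?_).trans_lt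
    (half_lt_self hε)
  calc ‖f.comp (S.comp (K i) - S)‖ = dist (f.comp S) ((compL 𝕜 E E 𝕜).flip (K i) (f.comp S)) := by
        rw [dist_eq_norm', comp_sub, flip_apply, compL_apply, comp_assoc]
    _ ≤ ε / 2 := (hi _ (mem_image_of_mem _ (mem_closedBall_zero_iff.2 hf))).le

end RCLike

theorem stmt14_general {E : Type*} [NormedAddCommGroup E] [NormedSpace ℝ E]
    {F : Type*} [NormedAddCommGroup F] [NormedSpace ℝ F]
    {ι : Type*} [Preorder ι] [IsDirected ι (· ≤ ·)] [Nonempty ι]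
    (K : ι → E →L[ℝ] E) (hcpt : ∀ α, IsCompactOperator (K α))
    (hnorm : ∀ α, ‖K α‖ ≤ 1)
    (hadj : ∀ xs : E →L[ℝ] ℝ, Tendsto (fun α => xs.comp (K α)) atTop (nhds xs))
    (hwstar : ∀ ψ : Dual ℝ (E →L[ℝ] E), ∃ l : ℝ, Tendsto (fun α => ψ (K α)) atTop (nhds l)) :
    ∃ Λ : Dual ℝ (E →L[ℝ] F) →L[ℝ] Dual ℝ (E →L[ℝ] F),
      (∀ (f : Dual ℝ (E →L[ℝ] F)) (T : E →L[ℝ] F),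
        Tendsto (fun α => f (T.comp (K α))) atTop (nhds (Λ f T))) ∧
      ‖Λ‖ ≤ 1 ∧
      (∀ f, Λ (Λ f) = Λ f) ∧
      (∀ f : Dual ℝ (E →L[ℝ] F), Λ f = 0 ↔ ∀ T : E →L[ℝ] F, IsCompactOperator T → f T = 0) := by
  let P : ι → Dual ℝ (E →L[ℝ] F) →L[ℝ] Dual ℝ (E →L[ℝ] F) := fun α =>
    (compL ℝ (E →L[ℝ] F) (E →L[ℝ] F) ℝ).flip ((compL ℝ E E F).flip (K α))
  have hP : ∀ α, ‖P α‖ ≤ 1 := fun α =>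
    calc ‖P α‖ ≤ ‖(compL ℝ E E F).flip (K α)‖ := norm_compL_flip_apply_le _
      _ ≤ ‖K α‖ := norm_compL_flip_apply_le _
      _ ≤ 1 := hnorm α
  obtain ⟨Λ, hΛnorm, hΛ⟩ := exists_tendsto_of_forall_tendsto₂ zero_le_one hP
    fun f T => hwstar (f.comp ((compL ℝ E E F) T))
  have hΛcpt : ∀ f {S : E →L[ℝ] F}, IsCompactOperator S → Λ f S = f S := fun f S hS =>
    tendsto_nhds_unique (hΛ f S) ((f.continuous.tendsto S).comp
      (hS.tendsto_comp_of_tendsto_comp_dual (C := 1) hnorm hadj))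
  have hcomp : ∀ (T : E →L[ℝ] F) α, IsCompactOperator (T.comp (K α)) := fun T α =>
    (hcpt α).clm_comp T
  refine ⟨Λ, hΛ, hΛnorm, fun f => ext fun T => ?_, fun f => ⟨fun hf S hS => ?_, fun hf => ?_⟩⟩
  · refine tendsto_nhds_unique (hΛ (Λ f) T) ?_
    simpa only [P, flip_apply, compL_apply, comp_apply, hΛcpt f (hcomp T _)] using hΛ f T
  · rw [← hΛcpt f hS, hf, zero_apply]
  · ext T
    refine tendsto_nhds_unique (hΛ f T) ?_
    simp [P, hf _ (hcomp T _)]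

theorem stmt14 {E : Type*} [NormedAddCommGroup E] [NormedSpace ℝ E] [CompleteSpace E]
    {F : Type*} [NormedAddCommGroup F] [NormedSpace ℝ F] [CompleteSpace F]
    {ι : Type*} [Preorder ι] [IsDirected ι (· ≤ ·)] [Nonempty ι]
    (K : ι → E →L[ℝ] E) (hcpt : ∀ α, IsCompactOperator (K α))
    (hnorm : ∀ α, ‖K α‖ ≤ 1)
    (hadj : ∀ xs : E →L[ℝ] ℝ, Tendsto (fun α => xs.comp (K α)) atTop (nhds xs))
    (hwstar : ∀ ψ : Dual ℝ (E →L[ℝ] E), ∃ l : ℝ, Tendsto (fun α => ψ (K α)) atTop (nhds l)) :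
    ∃ Λ : Dual ℝ (E →L[ℝ] F) →L[ℝ] Dual ℝ (E →L[ℝ] F),
      (∀ (f : Dual ℝ (E →L[ℝ] F)) (T : E →L[ℝ] F),
        Tendsto (fun α => f (T.comp (K α))) atTop (nhds (Λ f T))) ∧
      ‖Λ‖ ≤ 1 ∧
      (∀ f, Λ (Λ f) = Λ f) ∧
      (∀ f : Dual ℝ (E →L[ℝ] F), Λ f = 0 ↔ ∀ T : E →L[ℝ] F, IsCompactOperator T → f T = 0) :=
  stmt14_general K hcpt hnorm hadj hwstar
end

section
/- Let $X$ be a Banach space and $J$ a closed subspace. If $J$ is an HB-subspace of $X$ (there is a projection $\mathcal{Q}$ on $X^*$ with kernel $J^\perp$ such that $\|\mathcal{Q}f\|<\|f\|$ and $\|f-\mathcal{Q}f\|\le\|f\|$ whenever $f\ne\mathcal{Q}f$), then every $g\in J^*$ has a unique norm-preserving extension to $X^*$ (i.e. $J$ is HB-smooth in $X$). -/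
/-!
A norm-preserving extension `f` of `g ∈ J*` cannot be moved by `Q`: `Q f` is again an extension
of `g`, so `‖Q f‖ ≥ ‖g‖ = ‖f‖`, which rules out the strict inequality `‖Q f‖ < ‖f‖`. Two extensions
differ by an element of `J^⊥ = ker Q`, so all of them have the same image under `Q`; hence there
is at most one norm-preserving extension. Existence comes from Hahn–Banach: if `h` is any
norm-preserving extension, so is `Q h`.
-/

namespace ContinuousLinearMap

variable {𝕜 E : Type*} [NontriviallyNormedField 𝕜] [SeminormedAddCommGroup E] [NormedSpace 𝕜 E]
  {J : Submodule 𝕜 E} {Q : StrongDual 𝕜 E →L[𝕜] StrongDual 𝕜 E}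

theorem norm_comp_subtypeL_le (f : StrongDual 𝕜 E) : ‖f.comp J.subtypeL‖ ≤ ‖f‖ :=
  calc ‖f.comp J.subtypeL‖ ≤ ‖f‖ * ‖J.subtypeL‖ := opNorm_comp_le f _
    _ ≤ ‖f‖ * 1 := by gcongr; exact J.norm_subtypeL_le
    _ = ‖f‖ := mul_one _

theorem apply_comp_subtypeL_of_ker_le_annihilator (hproj : ∀ f, Q (Q f) = Q f)
    (hker : ∀ f, Q f = 0 → ∀ y ∈ J, f y = 0) (f : StrongDual 𝕜 E) :
    (Q f).comp J.subtypeL = f.comp J.subtypeL := by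
  have hsub : ∀ y ∈ J, (f - Q f) y = 0 := hker _ (by rw [map_sub, hproj, sub_self])
  ext ⟨y, hy⟩
  exact (sub_eq_zero.mp (hsub y hy)).symm

theorem apply_eq_of_comp_subtypeL_eq (hker : ∀ f, (∀ y ∈ J, f y = 0) → Q f = 0)
    {f f' : StrongDual 𝕜 E} (h : f.comp J.subtypeL = f'.comp J.subtypeL) : Q f = Q f' := by
  have hsub : Q (f - f') = 0 := hker _ fun y hy => by
    simpa [sub_eq_zero] using congr($h ⟨y, hy⟩)
  rwa [map_sub, sub_eq_zero] at hsub

theorem norm_apply_le_of_forall_ne_norm_apply_lt (hlt : ∀ f, f ≠ Q f → ‖Q f‖ < ‖f‖) (f : StrongDual 𝕜 E) :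
    ‖Q f‖ ≤ ‖f‖ := by
  by_cases hf : f = Q f
  · rw [← hf]
  · exact (hlt f hf).le

theorem apply_eq_self_of_norm_le_norm_comp_subtypeL (hproj : ∀ f, Q (Q f) = Q f)
    (hker : ∀ f, Q f = 0 → ∀ y ∈ J, f y = 0) (hlt : ∀ f, f ≠ Q f → ‖Q f‖ < ‖f‖)
    {f : StrongDual 𝕜 E} (hf : ‖f‖ ≤ ‖f.comp J.subtypeL‖) : Q f = f := by
  by_contra hne
  have : ‖f.comp J.subtypeL‖ ≤ ‖Q f‖ := by
    rw [← apply_comp_subtypeL_of_ker_le_annihilator hproj hker f]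
    exact norm_comp_subtypeL_le _
  exact absurd (hlt f (Ne.symm hne)) (by linarith)

end ContinuousLinearMap

theorem stmt15_general {X : Type*} [NormedAddCommGroup X] [NormedSpace ℝ X]
    (J : Submodule ℝ X)
    (Q : (X →L[ℝ] ℝ) →L[ℝ] (X →L[ℝ] ℝ))
    (hproj : ∀ f, Q (Q f) = Q f)
    (hker : ∀ f, Q f = 0 ↔ ∀ y ∈ J, f y = 0)
    (hHB : ∀ f : X →L[ℝ] ℝ, f ≠ Q f → ‖Q f‖ < ‖f‖ ∧ ‖f - Q f‖ ≤ ‖f‖) :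
    ∀ g : ↥J →L[ℝ] ℝ, ∃! f : X →L[ℝ] ℝ, f.comp J.subtypeL = g ∧ ‖f‖ = ‖g‖ := by
  intro g
  have hlt : ∀ f, f ≠ Q f → ‖Q f‖ < ‖f‖ := fun f hf => (hHB f hf).1
  obtain ⟨h, hhg, hnorm⟩ := exists_extension_norm_eq J g
  have hhg : h.comp J.subtypeL = g := ContinuousLinearMap.ext hhg
  have hQh : (Q h).comp J.subtypeL = g :=
    (ContinuousLinearMap.apply_comp_subtypeL_of_ker_le_annihilator hproj (fun f => (hker f).1)
      h).trans hhg
  refine ⟨Q h, ⟨hQh, le_antisymm ?_ ?_⟩, fun f ⟨hfg, hfnorm⟩ => ?_⟩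
  · exact hnorm ▸ ContinuousLinearMap.norm_apply_le_of_forall_ne_norm_apply_lt hlt h
  · exact hQh ▸ ContinuousLinearMap.norm_comp_subtypeL_le _
  calc f = Q f :=
        (ContinuousLinearMap.apply_eq_self_of_norm_le_norm_comp_subtypeL hproj
          (fun f => (hker f).1) hlt (hfg ▸ hfnorm.le)).symm
    _ = Q h :=
        ContinuousLinearMap.apply_eq_of_comp_subtypeL_eq (fun f => (hker f).2) (hfg.trans hhg.symm)

theorem stmt15 {X : Type*} [NormedAddCommGroup X] [NormedSpace ℝ X] [CompleteSpace X]
    (J : Submodule ℝ X) (hJc : IsClosed (J : Set X))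
    (Q : (X →L[ℝ] ℝ) →L[ℝ] (X →L[ℝ] ℝ))
    (hproj : ∀ f, Q (Q f) = Q f)
    (hker : ∀ f, Q f = 0 ↔ ∀ y ∈ J, f y = 0)
    (hHB : ∀ f : X →L[ℝ] ℝ, f ≠ Q f → ‖Q f‖ < ‖f‖ ∧ ‖f - Q f‖ ≤ ‖f‖) :
    ∀ g : ↥J →L[ℝ] ℝ, ∃! f : X →L[ℝ] ℝ, f.comp J.subtypeL = g ∧ ‖f‖ = ‖g‖ :=
  stmt15_general J Q hproj hker hHB
end
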